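/- arXiv:math/0611377 — 6 statements merged into one kernel-verified Lean document; each statement's English description precedes it below -/
import Mathlib

section
/- Let a, b be compactly supported generalized real numbers with a << b, and let f ∈ G(ℝ). Then for any representatives (a_ε)_ε, (b_ε)_ε, (f_ε)_ε of a, b, f, the net of real numbers (∫_{a_ε}^{b_ε} |f_ε(x)| dx)_ε is moderate, and if (a_ε'), (b_ε'), (f_ε') are other representatives of a, b, f, then the net (∫_{a_ε}^{b_ε} |f_ε(x)|dx − ∫_{a_ε'}^{b_ε'} |f_ε'(x)|dx)_ε is negligible; hence ∫_a^b |f| dx is a well-defined generalized real number. -/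
open Set Filter Topology MeasureTheory

noncomputable section

variable {E F : Type*} [NormedAddCommGroup E] [NormedSpace ℝ E]
  [NormedAddCommGroup F] [NormedSpace ℝ F]

/-- A net of smooth functions, indexed by `ε ∈ (0,1]`, is *moderate* on the open set `Ω`:
all iterated derivatives are `O(ε^{-N})` on compact subsets, for some `N`. -/
def IsModerate (Ω : Set E) (u : ℝ → E → F) : Prop :=
  (∀ ε ∈ Set.Ioc (0:ℝ) 1, ContDiffOn ℝ (⊤:ℕ∞) (u ε) Ω) ∧
  ∀ K : Set E, IsCompact K → K ⊆ Ω → ∀ n : ℕ, ∃ N : ℕ, ∃ C : ℝ, ∃ ε₀ : ℝ, 0 < ε₀ ∧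
    ∀ ε : ℝ, 0 < ε → ε < ε₀ → ∀ x ∈ K,
      ‖iteratedFDerivWithin ℝ n (u ε) Ω x‖ ≤ C * ε ^ (-(N:ℤ))

/-- A net of smooth functions is *negligible* on `Ω`: all iterated derivatives are `O(ε^m)`
on compact subsets, for every `m`. -/
def IsNegligible (Ω : Set E) (u : ℝ → E → F) : Prop :=
  (∀ ε ∈ Set.Ioc (0:ℝ) 1, ContDiffOn ℝ (⊤:ℕ∞) (u ε) Ω) ∧
  ∀ K : Set E, IsCompact K → K ⊆ Ω → ∀ n : ℕ, ∀ m : ℕ, ∃ C : ℝ, ∃ ε₀ : ℝ, 0 < ε₀ ∧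
    ∀ ε : ℝ, 0 < ε → ε < ε₀ → ∀ x ∈ K,
      ‖iteratedFDerivWithin ℝ n (u ε) Ω x‖ ≤ C * ε ^ m

/-- A net of numbers is *moderate*: `O(ε^{-N})` for some `N`. -/
def NumModerate (c : ℝ → F) : Prop :=
  ∃ N : ℕ, ∃ C : ℝ, ∃ ε₀ : ℝ, 0 < ε₀ ∧ ∀ ε : ℝ, 0 < ε → ε < ε₀ → ‖c ε‖ ≤ C * ε ^ (-(N:ℤ))

/-- A net of numbers is *negligible*: `O(ε^m)` for every `m`. -/
def NumNegligible (c : ℝ → F) : Prop :=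
  ∀ m : ℕ, ∃ C : ℝ, ∃ ε₀ : ℝ, 0 < ε₀ ∧ ∀ ε : ℝ, 0 < ε → ε < ε₀ → ‖c ε‖ ≤ C * ε ^ m

/-- A net of points is a representative of a *compactly supported generalized point* of `Ω`. -/
def CompactlySupportedPoint (Ω : Set E) (a : ℝ → E) : Prop :=
  ∃ K : Set E, IsCompact K ∧ K ⊆ Ω ∧ ∃ ε₀ : ℝ, 0 < ε₀ ∧ ∀ ε : ℝ, 0 < ε → ε < ε₀ → a ε ∈ K

/-- The partial order on generalized reals, on representatives: `a ≤ b` iff `b - a` has a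
representative with all terms nonnegative, i.e. `a ε + n ε ≤ b ε` for some negligible `n`. -/
def TildeLe (a b : ℝ → ℝ) : Prop :=
  ∃ n : ℝ → ℝ, NumNegligible n ∧ ∀ ε ∈ Set.Ioc (0:ℝ) 1, a ε + n ε ≤ b ε

/-- Strict order `a << b`: `b - a` is strictly positive, i.e. `b ε - a ε > ε^m` for some `m`
and all small `ε`. -/
def TildeLt (a b : ℝ → ℝ) : Prop :=
  ∃ m : ℕ, ∃ ε₀ : ℝ, 0 < ε₀ ∧ ∀ ε : ℝ, 0 < ε → ε < ε₀ → a ε + ε ^ m < b ε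

-- helper lemmas to be inserted before the theorem

lemma compact_subset_Icc (K : Set ℝ) (hK : IsCompact K) : ∃ R : ℝ, 0 ≤ R ∧ K ⊆ Icc (-R) R := by
  obtain ⟨r, hr⟩ := hK.isBounded.subset_closedBall 0
  refine ⟨|r|, abs_nonneg r, fun x hx => ?_⟩
  have := hr hx
  rw [Metric.mem_closedBall, Real.dist_eq, sub_zero] at this
  have h2 := abs_le.mp (this.trans (le_abs_self r))
  exact mem_Icc.mpr ⟨h2.1, h2.2⟩

lemma uIoc_subset_Icc' {a b l u : ℝ} (ha : a ∈ Icc l u) (hb : b ∈ Icc l u) :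
    Set.uIoc a b ⊆ Icc l u := by
  rw [mem_Icc] at ha hb
  intro x hx
  rw [Set.mem_uIoc] at hx
  rw [mem_Icc]
  rcases hx with ⟨h1, h2⟩ | ⟨h1, h2⟩ <;> constructor <;> linarith

lemma moderate_sup (f : ℝ → ℝ → ℂ) (hf : IsModerate (univ : Set ℝ) f)
    (K : Set ℝ) (hK : IsCompact K) :
    ∃ N : ℕ, ∃ C : ℝ, ∃ ε₀ : ℝ, 0 < ε₀ ∧ 0 ≤ C ∧
      ∀ ε : ℝ, 0 < ε → ε < ε₀ → ∀ x ∈ K, ‖f ε x‖ ≤ C * ε ^ (-(N:ℤ)) := by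
  obtain ⟨N, C, ε₀, hε₀, h⟩ := hf.2 K hK (subset_univ K) 0
  refine ⟨N, |C|, ε₀, hε₀, abs_nonneg _, fun ε hε hε' x hx => ?_⟩
  have h2 := h ε hε hε' x hx
  rw [norm_iteratedFDerivWithin_zero] at h2
  have h3 : C * ε ^ (-(N:ℤ)) ≤ |C| * ε ^ (-(N:ℤ)) :=
    mul_le_mul_of_nonneg_right (le_abs_self C) (zpow_nonneg hε.le _)
  linarith

lemma negligible_sup (f : ℝ → ℝ → ℂ) (hf : IsNegligible (univ : Set ℝ) f)
    (K : Set ℝ) (hK : IsCompact K) (m : ℕ) :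
    ∃ C : ℝ, ∃ ε₀ : ℝ, 0 < ε₀ ∧ 0 ≤ C ∧
      ∀ ε : ℝ, 0 < ε → ε < ε₀ → ∀ x ∈ K, ‖f ε x‖ ≤ C * ε ^ m := by
  obtain ⟨C, ε₀, hε₀, h⟩ := hf.2 K hK (subset_univ K) 0 m
  refine ⟨|C|, ε₀, hε₀, abs_nonneg _, fun ε hε hε' x hx => ?_⟩
  have h2 := h ε hε hε' x hx
  rw [norm_iteratedFDerivWithin_zero] at h2
  have h3 : C * ε ^ m ≤ |C| * ε ^ m :=
    mul_le_mul_of_nonneg_right (le_abs_self C) (pow_nonneg hε.le _)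
  linarith

lemma numNegligible_bound (c : ℝ → ℝ) (h : NumNegligible c) (m : ℕ) :
    ∃ C : ℝ, ∃ ε₀ : ℝ, 0 < ε₀ ∧ 0 ≤ C ∧
      ∀ ε : ℝ, 0 < ε → ε < ε₀ → |c ε| ≤ C * ε ^ m := by
  obtain ⟨C, ε₀, hε₀, h2⟩ := h m
  refine ⟨|C|, ε₀, hε₀, abs_nonneg _, fun ε hε hε' => ?_⟩
  have h3 := h2 ε hε hε'
  rw [Real.norm_eq_abs] at h3
  have h4 : C * ε ^ m ≤ |C| * ε ^ m :=
    mul_le_mul_of_nonneg_right (le_abs_self C) (pow_nonneg hε.le _)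
  linarith

/-- the integral `∫_a^b |f|` is a well-defined generalized real number:
the net of integrals is moderate, and it is independent (modulo negligible nets) of the
choice of representatives of `a`, `b` and `f`. -/
theorem statement_1
    (a b a' b' : ℝ → ℝ) (f f' : ℝ → ℝ → ℂ)
    (haC : CompactlySupportedPoint (Set.univ : Set ℝ) a)
    (hbC : CompactlySupportedPoint (Set.univ : Set ℝ) b)
    (hab : TildeLt a b)
    (hf : IsModerate (Set.univ : Set ℝ) f)
    (ha' : NumModerate a') (hb' : NumModerate b')
    (hf' : IsModerate (Set.univ : Set ℝ) f')
    (haa' : NumNegligible (fun ε => a ε - a' ε))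
    (hbb' : NumNegligible (fun ε => b ε - b' ε))
    (hff' : IsNegligible (Set.univ : Set ℝ) (fun ε x => f ε x - f' ε x)) :
    NumModerate (fun ε => ∫ x in a ε..b ε, ‖f ε x‖) ∧
    NumNegligible (fun ε =>
      (∫ x in a ε..b ε, ‖f ε x‖) - ∫ x in a' ε..b' ε, ‖f' ε x‖) := by
  -- Common setup
  obtain ⟨Ka, hKaC, -, εa, hεa, hKa⟩ := haC
  obtain ⟨Kb, hKbC, -, εb, hεb, hKb⟩ := hbC
  obtain ⟨R, hR0, hRK⟩ := compact_subset_Icc (Ka ∪ Kb) (hKaC.union hKbC)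
  -- K1 contains a ε and b ε for small ε; K2 is an enlargement containing a' ε, b' ε too.
  set K2 : Set ℝ := Icc (-(R+1)) (R+1) with hK2def
  have hK2c : IsCompact K2 := isCompact_Icc
  have hK1sub : Icc (-R) R ⊆ K2 := Icc_subset_Icc (by linarith) (by linarith)
  have haK : ∀ ε : ℝ, 0 < ε → ε < εa → a ε ∈ Icc (-R) R :=
    fun ε hε hε' => hRK (Or.inl (hKa ε hε hε'))
  have hbK : ∀ ε : ℝ, 0 < ε → ε < εb → b ε ∈ Icc (-R) R :=
    fun ε hε hε' => hRK (Or.inr (hKb ε hε hε'))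
  constructor
  · -- Moderateness
    obtain ⟨N, C, ε₁, hε₁, hC0, hsup⟩ := moderate_sup f hf K2 hK2c
    refine ⟨N, C * (2 * R), min (min εa εb) (min ε₁ 1), by positivity, fun ε hε hε' => ?_⟩
    simp only [lt_min_iff] at hε'
    obtain ⟨⟨hεa', hεb'⟩, hε₁', hεone⟩ := hε'
    have haε := haK ε hε hεa'
    have hbε := hbK ε hε hεb'
    have hbound : ∀ x ∈ Set.uIoc (a ε) (b ε), ‖‖f ε x‖‖ ≤ C * ε ^ (-(N:ℤ)) := by
      intro x hx
      rw [norm_norm]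
      exact hsup ε hε hε₁' x (hK1sub (uIoc_subset_Icc' haε hbε hx))
    have h1 := intervalIntegral.norm_integral_le_of_norm_le_const hbound
    have h2 : |b ε - a ε| ≤ 2 * R := by
      rw [mem_Icc] at haε hbε
      rw [abs_le]; constructor <;> linarith
    calc ‖∫ x in a ε..b ε, ‖f ε x‖‖ ≤ C * ε ^ (-(N:ℤ)) * |b ε - a ε| := h1
      _ ≤ C * ε ^ (-(N:ℤ)) * (2 * R) :=
          mul_le_mul_of_nonneg_left h2 (by positivity)
      _ = C * (2 * R) * ε ^ (-(N:ℤ)) := by ring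
  · -- Negligibility of the difference
    intro m
    obtain ⟨N', C', ε₂, hε₂, hC'0, hsup'⟩ := moderate_sup f' hf' K2 hK2c
    obtain ⟨Cm, εm, hεm, hCm0, hsupm⟩ := negligible_sup _ hff' K2 hK2c m
    obtain ⟨Caa, εa2, hεa2, hCaa0, haa2⟩ := numNegligible_bound _ haa' (m + N')
    obtain ⟨Cbb, εb2, hεb2, hCbb0, hbb2⟩ := numNegligible_bound _ hbb' (m + N')
    obtain ⟨Ca1, εa1, hεa1, hCa10, haa1⟩ := numNegligible_bound _ haa' 1
    obtain ⟨Cb1, εb1, hεb1, hCb10, hbb1⟩ := numNegligible_bound _ hbb' 1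
    refine ⟨Cm * (2 * R) + C' * Caa + C' * Cbb,
      min (min (min εa εb) (min ε₂ εm)) (min (min εa2 εb2)
        (min (min εa1 εb1) (min 1 (min (1/(Ca1+1)) (1/(Cb1+1)))))),
      by positivity, fun ε hε hε' => ?_⟩
    simp only [lt_min_iff] at hε'
    obtain ⟨⟨⟨hεa', hεb'⟩, hε₂', hεm'⟩, ⟨hεa2', hεb2'⟩, ⟨hεa1', hεb1'⟩, hεone,
      hεca, hεcb⟩ := hε'
    have hεle1 : ε ≤ 1 := hεone.le
    -- membership of the four endpoints in K2
    have haε := haK ε hε hεa'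
    have hbε := hbK ε hε hεb'
    have haε2 : a ε ∈ K2 := hK1sub haε
    have hbε2 : b ε ∈ K2 := hK1sub hbε
    have ha'ε : a' ε ∈ K2 := by
      have h1 := haa1 ε hε hεa1'
      rw [pow_one] at h1
      have h2 : Ca1 * ε < 1 := by
        have h3 : 0 < Ca1 + 1 := by linarith
        have h4 : ε * (Ca1 + 1) < 1 := by
          rw [one_div] at hεca
          calc ε * (Ca1 + 1) < (Ca1+1)⁻¹ * (Ca1+1) := by
                exact mul_lt_mul_of_pos_right hεca h3
            _ = 1 := inv_mul_cancel₀ (ne_of_gt h3)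
        nlinarith
      rw [mem_Icc] at haε ⊢
      rw [abs_le] at h1
      constructor <;> linarith
    have hb'ε : b' ε ∈ K2 := by
      have h1 := hbb1 ε hε hεb1'
      rw [pow_one] at h1
      have h2 : Cb1 * ε < 1 := by
        have h3 : 0 < Cb1 + 1 := by linarith
        have h4 : ε * (Cb1 + 1) < 1 := by
          rw [one_div] at hεcb
          calc ε * (Cb1 + 1) < (Cb1+1)⁻¹ * (Cb1+1) := by
                exact mul_lt_mul_of_pos_right hεcb h3
            _ = 1 := inv_mul_cancel₀ (ne_of_gt h3)
        nlinarith
      rw [mem_Icc] at hbε ⊢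
      rw [abs_le] at h1
      constructor <;> linarith
    -- continuity and integrability
    have hcont : Continuous (f ε) :=
      (contDiffOn_univ.mp (hf.1 ε ⟨hε, hεle1⟩)).continuous
    have hcont' : Continuous (f' ε) :=
      (contDiffOn_univ.mp (hf'.1 ε ⟨hε, hεle1⟩)).continuous
    have hint : ∀ u v : ℝ, IntervalIntegrable (fun x => ‖f ε x‖) volume u v :=
      fun u v => (hcont.norm).intervalIntegrable u v
    have hint' : ∀ u v : ℝ, IntervalIntegrable (fun x => ‖f' ε x‖) volume u v :=
      fun u v => (hcont'.norm).intervalIntegrable u v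
    -- splitting of the second integral
    have e1 : (∫ x in a' ε..a ε, ‖f' ε x‖) + (∫ x in a ε..b ε, ‖f' ε x‖)
        = ∫ x in a' ε..b ε, ‖f' ε x‖ :=
      intervalIntegral.integral_add_adjacent_intervals (hint' _ _) (hint' _ _)
    have e2 : (∫ x in a' ε..b ε, ‖f' ε x‖) + (∫ x in b ε..b' ε, ‖f' ε x‖)
        = ∫ x in a' ε..b' ε, ‖f' ε x‖ :=
      intervalIntegral.integral_add_adjacent_intervals (hint' _ _) (hint' _ _)
    -- Term 1
    have hT1 : |(∫ x in a ε..b ε, ‖f ε x‖) - ∫ x in a ε..b ε, ‖f' ε x‖|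
        ≤ Cm * ε ^ m * (2 * R) := by
      rw [← intervalIntegral.integral_sub (hint _ _) (hint' _ _)]
      have hbound : ∀ x ∈ Set.uIoc (a ε) (b ε), ‖‖f ε x‖ - ‖f' ε x‖‖ ≤ Cm * ε ^ m := by
        intro x hx
        have hx2 : x ∈ K2 := hK1sub (uIoc_subset_Icc' haε hbε hx)
        have := hsupm ε hε hεm' x hx2
        rw [Real.norm_eq_abs]
        exact (abs_norm_sub_norm_le (f ε x) (f' ε x)).trans this
      have h1 := intervalIntegral.norm_integral_le_of_norm_le_const hbound
      rw [Real.norm_eq_abs] at h1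
      have h2 : |b ε - a ε| ≤ 2 * R := by
        rw [mem_Icc] at haε hbε
        rw [abs_le]; constructor <;> linarith
      calc |∫ x in a ε..b ε, (‖f ε x‖ - ‖f' ε x‖)| ≤ Cm * ε ^ m * |b ε - a ε| := h1
        _ ≤ Cm * ε ^ m * (2 * R) := mul_le_mul_of_nonneg_left h2 (by positivity)
    -- exponent arithmetic
    have hzpow : ε ^ (-(N':ℤ)) * ε ^ (m + N') = ε ^ m := by
      have h1 : ε ^ (m + N') = (ε : ℝ) ^ ((m + N' : ℕ) : ℤ) := (zpow_natCast ε (m + N')).symm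
      rw [h1, ← zpow_add₀ (ne_of_gt hε)]
      have h2 : (-(N':ℤ)) + ((m + N' : ℕ) : ℤ) = (m : ℤ) := by push_cast; ring
      rw [h2, zpow_natCast]
    -- Term 2
    have hT2 : |∫ x in a' ε..a ε, ‖f' ε x‖| ≤ C' * Caa * ε ^ m := by
      have hbound : ∀ x ∈ Set.uIoc (a' ε) (a ε), ‖‖f' ε x‖‖ ≤ C' * ε ^ (-(N':ℤ)) := by
        intro x hx
        rw [norm_norm]
        exact hsup' ε hε hε₂' x (uIoc_subset_Icc' ha'ε haε2 hx)
      have h1 := intervalIntegral.norm_integral_le_of_norm_le_const hbound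
      rw [Real.norm_eq_abs] at h1
      have h2 : |a ε - a' ε| ≤ Caa * ε ^ (m + N') := haa2 ε hε hεa2'
      calc |∫ x in a' ε..a ε, ‖f' ε x‖| ≤ C' * ε ^ (-(N':ℤ)) * |a ε - a' ε| := h1
        _ ≤ C' * ε ^ (-(N':ℤ)) * (Caa * ε ^ (m + N')) :=
            mul_le_mul_of_nonneg_left h2 (by positivity)
        _ = C' * Caa * (ε ^ (-(N':ℤ)) * ε ^ (m + N')) := by ring
        _ = C' * Caa * ε ^ m := by rw [hzpow]
    -- Term 3
    have hT3 : |∫ x in b ε..b' ε, ‖f' ε x‖| ≤ C' * Cbb * ε ^ m := by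
      have hbound : ∀ x ∈ Set.uIoc (b ε) (b' ε), ‖‖f' ε x‖‖ ≤ C' * ε ^ (-(N':ℤ)) := by
        intro x hx
        rw [norm_norm]
        exact hsup' ε hε hε₂' x (uIoc_subset_Icc' hbε2 hb'ε hx)
      have h1 := intervalIntegral.norm_integral_le_of_norm_le_const hbound
      rw [Real.norm_eq_abs] at h1
      have h2 : |b' ε - b ε| ≤ Cbb * ε ^ (m + N') := by
        have := hbb2 ε hε hεb2'
        rwa [abs_sub_comm]
      calc |∫ x in b ε..b' ε, ‖f' ε x‖| ≤ C' * ε ^ (-(N':ℤ)) * |b' ε - b ε| := h1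
        _ ≤ C' * ε ^ (-(N':ℤ)) * (Cbb * ε ^ (m + N')) :=
            mul_le_mul_of_nonneg_left h2 (by positivity)
        _ = C' * Cbb * (ε ^ (-(N':ℤ)) * ε ^ (m + N')) := by ring
        _ = C' * Cbb * ε ^ m := by rw [hzpow]
    -- combine
    have hE : (∫ x in a' ε..b' ε, ‖f' ε x‖)
        = (∫ x in a' ε..a ε, ‖f' ε x‖) + (∫ x in a ε..b ε, ‖f' ε x‖)
          + (∫ x in b ε..b' ε, ‖f' ε x‖) := by
      rw [← e2, ← e1]
    have hT1' := abs_le.mp hT1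
    have hT2' := abs_le.mp hT2
    have hT3' := abs_le.mp hT3
    show ‖(∫ x in a ε..b ε, ‖f ε x‖) - ∫ x in a' ε..b' ε, ‖f' ε x‖‖ ≤ _
    rw [Real.norm_eq_abs, hE, abs_le]
    constructor <;>
      linarith [hT1'.1, hT1'.2, hT2'.1, hT2'.2, hT3'.1, hT3'.2]
end
end

section
/- Let a, b be compactly supported generalized real numbers with a << b, and let f ∈ G(ℝ). If ∫_a^b |f| dx = 0 in ℝ̃, i.e. the net (∫_{a_ε}^{b_ε} |f_ε(x)|dx)_ε is negligible, then f(x_c) = 0 in ℝ̃ for every compactly supported generalized point x_c satisfying a ≤ x_c ≤ b. -/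
/-! On `[a ε, b ε]` the function `f ε` is Lipschitz with a moderate constant `Λ ε`. So if
`M = ‖f ε y‖` at a point `y` of that interval, `‖f ε‖ ≥ M / 2` on a subinterval of length
`min (M / (2 Λ ε)) ((b ε - a ε) / 2)`, whence `M² ≤ 16 (Λ ε I ε + (I ε / (b ε - a ε))²)` with
`I ε = ∫ t in a ε..b ε, ‖f ε t‖`. The right side is negligible since `I` is negligible while `Λ`
and `(b - a)⁻¹` are moderate (`a << b`). Finally, if `a ε + n₁ ε ≤ x ε ≤ b ε - n₂ ε` with
negligible `n₁, n₂`, then `x ε` lies within `|n₁ ε| + |n₂ ε|` of its projection onto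
`[a ε, b ε]`, and `Λ` times a negligible net is negligible. -/

open Set Filter Topology MeasureTheory

noncomputable section

variable {E F : Type*} [NormedAddCommGroup E] [NormedSpace ℝ E]
  [NormedAddCommGroup F] [NormedSpace ℝ F]

open Asymptotics

section Integral

variable {V : Type*} [NormedAddCommGroup V] {g : ℝ → V} {A B : ℝ}

lemma mul_sub_le_integral_norm {c d L : ℝ} (hg : ContinuousOn g (Icc A B))
    (hAc : A ≤ c) (hcd : c ≤ d) (hdB : d ≤ B) (hL : ∀ t ∈ Icc c d, L ≤ ‖g t‖) :
    L * (d - c) ≤ ∫ t in A..B, ‖g t‖ :=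
  calc L * (d - c) = ∫ _ in c..d, L := by simp [mul_comm]
    _ ≤ ∫ t in c..d, ‖g t‖ :=
      intervalIntegral.integral_mono_on hcd intervalIntegrable_const
        ((hg.norm.mono (Icc_subset_Icc hAc hdB)).intervalIntegrable_of_Icc hcd) hL
    _ ≤ ∫ t in A..B, ‖g t‖ :=
      intervalIntegral.integral_mono_interval hAc hcd hdB
        (Eventually.of_forall fun _ => norm_nonneg _)
        (hg.norm.intervalIntegrable_of_Icc (hAc.trans (hcd.trans hdB)))

variable {x Λ : ℝ}

lemma norm_mul_min_le_integral_norm (hg : ContinuousOn g (Icc A B)) (hΛ : 0 < Λ)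
    (hlip : ∀ y ∈ Icc A B, ∀ z ∈ Icc A B, ‖g y - g z‖ ≤ Λ * |y - z|) (hx : x ∈ Icc A B) :
    ‖g x‖ / 2 * min (‖g x‖ / (2 * Λ)) ((B - A) / 2) ≤ ∫ t in A..B, ‖g t‖ := by
  set δ := min (‖g x‖ / (2 * Λ)) ((B - A) / 2)
  have hδ : 0 ≤ δ := le_min (by positivity) (by linarith [hx.1, hx.2])
  have hΛδ : Λ * δ ≤ ‖g x‖ / 2 :=
    calc Λ * δ ≤ Λ * (‖g x‖ / (2 * Λ)) := mul_le_mul_of_nonneg_left (min_le_left _ _) hΛ.le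
      _ = ‖g x‖ / 2 := by field_simp
  obtain ⟨c, hAc, hcB, hnear⟩ :
      ∃ c, A ≤ c ∧ c + δ ≤ B ∧ ∀ t ∈ Icc c (c + δ), |x - t| ≤ δ := by
    have hδB : δ ≤ (B - A) / 2 := min_le_right _ _
    rcases le_total x ((A + B) / 2) with h | h
    · exact ⟨x, hx.1, by linarith, fun t ht => abs_le.2 ⟨by linarith [ht.2], by linarith [ht.1]⟩⟩
    · exact ⟨x - δ, by linarith [hx.1], by linarith [hx.2],
        fun t ht => abs_le.2 ⟨by linarith [ht.2], by linarith [ht.1]⟩⟩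
  have hlow : ∀ t ∈ Icc c (c + δ), ‖g x‖ / 2 ≤ ‖g t‖ := by
    intro t ht
    have ht' : t ∈ Icc A B := ⟨hAc.trans ht.1, ht.2.trans hcB⟩
    have := (norm_sub_norm_le (g x) (g t)).trans (hlip x hx t ht')
    nlinarith [hnear t ht]
  simpa using mul_sub_le_integral_norm hg hAc (by linarith) hcB hlow

lemma sq_norm_le_of_lipschitz_bound (hg : ContinuousOn g (Icc A B)) (hΛ : 0 < Λ)
    (hlip : ∀ y ∈ Icc A B, ∀ z ∈ Icc A B, ‖g y - g z‖ ≤ Λ * |y - z|) (hx : x ∈ Icc A B)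
    (hAB : A < B) :
    ‖g x‖ ^ 2 ≤ 16 * (Λ * (∫ t in A..B, ‖g t‖) + ((∫ t in A..B, ‖g t‖) / (B - A)) ^ 2) := by
  have key := norm_mul_min_le_integral_norm hg hΛ hlip hx
  set M := ‖g x‖
  set I := ∫ t in A..B, ‖g t‖
  have hM : 0 ≤ M := norm_nonneg _
  have hI : 0 ≤ I := intervalIntegral.integral_nonneg hAB.le fun _ _ => norm_nonneg _
  have hBA : 0 < B - A := by linarith
  rcases min_cases (M / (2 * Λ)) ((B - A) / 2) with ⟨h, -⟩ | ⟨h, -⟩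
  · rw [h, show M / 2 * (M / (2 * Λ)) = M ^ 2 / (4 * Λ) by field_simp; ring,
      div_le_iff₀ (by positivity)] at key
    nlinarith [sq_nonneg (I / (B - A))]
  · rw [h] at key
    have hMI : M ≤ 4 * (I / (B - A)) := by
      rw [mul_div_assoc', le_div_iff₀ hBA]; linarith
    nlinarith [mul_nonneg hΛ.le hI]

end Integral

section Nets

variable {V : Type*} [NormedAddCommGroup V]

lemma eventually_nhdsGT_zero_iff {P : ℝ → Prop} :
    (∀ᶠ ε in 𝓝[>] 0, P ε) ↔ ∃ ε₀ : ℝ, 0 < ε₀ ∧ ∀ ε : ℝ, 0 < ε → ε < ε₀ → P ε := by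
  simp only [(nhdsGT_basis (0 : ℝ)).eventually_iff, mem_Ioo, and_imp]

lemma isBigO_nhdsGT_zero_iff {c : ℝ → V} {g : ℝ → ℝ} (hg : ∀ ε, 0 < ε → 0 ≤ g ε) :
    c =O[𝓝[>] 0] g ↔
      ∃ C : ℝ, ∃ ε₀ : ℝ, 0 < ε₀ ∧ ∀ ε : ℝ, 0 < ε → ε < ε₀ → ‖c ε‖ ≤ C * g ε := by
  simp only [isBigO_iff, eventually_nhdsGT_zero_iff]
  refine exists_congr fun C => exists_congr fun ε₀ => and_congr_right fun _ =>
    forall_congr' fun ε => forall_congr' fun hε => ?_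
  rw [Real.norm_of_nonneg (hg ε hε)]

lemma numNegligible_iff_isBigO {c : ℝ → V} :
    NumNegligible c ↔ ∀ m : ℕ, c =O[𝓝[>] 0] (fun ε => ε ^ m) :=
  forall_congr' fun m => (isBigO_nhdsGT_zero_iff fun _ hε => by positivity).symm

lemma numModerate_iff_isBigO {c : ℝ → V} :
    NumModerate c ↔ ∃ N : ℕ, c =O[𝓝[>] 0] (fun ε => ε ^ (-(N : ℤ))) :=
  exists_congr fun N => (isBigO_nhdsGT_zero_iff fun _ hε => by positivity).symm

namespace NumNegligible

lemma add {c d : ℝ → V} (hc : NumNegligible c) (hd : NumNegligible d) :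
    NumNegligible (fun ε => c ε + d ε) := by
  rw [numNegligible_iff_isBigO] at *
  exact fun m => (hc m).add (hd m)

lemma norm {c : ℝ → V} (hc : NumNegligible c) : NumNegligible (fun ε => ‖c ε‖) := by
  rw [numNegligible_iff_isBigO] at *
  exact fun m => (hc m).norm_left

lemma const_mul {c : ℝ → ℝ} (hc : NumNegligible c) (r : ℝ) :
    NumNegligible (fun ε => r * c ε) := by
  rw [numNegligible_iff_isBigO] at *
  exact fun m => (hc m).const_mul_left r

lemma of_eventually_norm_le {c : ℝ → V} {d : ℝ → ℝ} (hd : NumNegligible d)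
    (hcd : ∀ᶠ ε in 𝓝[>] 0, ‖c ε‖ ≤ d ε) : NumNegligible c := by
  rw [numNegligible_iff_isBigO] at *
  exact fun m => (IsBigO.of_bound 1 (hcd.mono fun ε h => by
    simpa using h.trans (le_abs_self _))).trans (hd m)

lemma numModerate {c : ℝ → V} (hc : NumNegligible c) : NumModerate c := by
  obtain ⟨C, ε₀, hε₀, hC⟩ := hc 0
  exact ⟨0, C, ε₀, hε₀, by simpa using hC⟩

lemma mul_numModerate {c d : ℝ → ℝ} (hc : NumNegligible c) (hd : NumModerate d) :
    NumNegligible (fun ε => c ε * d ε) := by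
  obtain ⟨N, hd⟩ := numModerate_iff_isBigO.1 hd
  rw [numNegligible_iff_isBigO] at *
  refine fun m => ((hc (m + N)).mul hd).congr' EventuallyEq.rfl ?_
  filter_upwards [self_mem_nhdsWithin] with ε (hε : 0 < ε)
  rw [pow_add, mul_assoc, ← zpow_natCast ε N, ← zpow_add₀ hε.ne']
  simp

lemma of_pow {c : ℝ → ℝ} {k : ℕ} (hk : k ≠ 0) (hc : NumNegligible (fun ε => c ε ^ k)) :
    NumNegligible c := by
  rw [numNegligible_iff_isBigO] at *
  refine fun m => IsBigO.of_pow hk ((hc (m * k)).congr' EventuallyEq.rfl ?_)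
  exact Eventually.of_forall fun ε => by simp [pow_mul]

end NumNegligible

lemma TildeLt.eventually_lt {a b : ℝ → ℝ} (hab : TildeLt a b) :
    ∀ᶠ ε in 𝓝[>] 0, a ε < b ε := by
  obtain ⟨m, hm⟩ := hab
  filter_upwards [eventually_nhdsGT_zero_iff.2 hm, self_mem_nhdsWithin] with ε h (hε : 0 < ε)
  linarith [pow_pos hε m]

lemma TildeLt.numModerate_inv_sub {a b : ℝ → ℝ} (hab : TildeLt a b) :
    NumModerate (fun ε => (b ε - a ε)⁻¹) := by
  obtain ⟨m, ε₀, hε₀, hm⟩ := hab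
  refine ⟨m, 1, ε₀, hε₀, fun ε hε hεε₀ => ?_⟩
  have hgap : ε ^ m < b ε - a ε := by linarith [hm ε hε hεε₀]
  rw [norm_inv, Real.norm_of_nonneg (by linarith [pow_pos hε m]), one_mul, zpow_neg,
    zpow_natCast]
  exact inv_anti₀ (pow_pos hε m) hgap.le

lemma CompactlySupportedPoint.eventually_norm_le {Ω : Set V} {a : ℝ → V}
    (ha : CompactlySupportedPoint Ω a) : ∀ᶠ R in atTop, ∀ᶠ ε in 𝓝[>] 0, ‖a ε‖ ≤ R := by
  obtain ⟨K, hK, -, haK⟩ := ha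
  obtain ⟨C, hC⟩ := hK.isBounded.exists_norm_le
  filter_upwards [eventually_ge_atTop C] with R hR
  exact (eventually_nhdsGT_zero_iff.2 haK).mono fun ε hε => (hC _ hε).trans hR

end Nets

lemma IsModerate.exists_lipschitz_bound {Ω K : Set E} {u : ℝ → E → F} (hu : IsModerate Ω u)
    (hΩ : IsOpen Ω) (hK : IsCompact K) (hKΩ : K ⊆ Ω) (hKc : Convex ℝ K) :
    ∃ Λ : ℝ → ℝ, NumModerate Λ ∧ ∀ᶠ ε in 𝓝[>] 0,
      0 < Λ ε ∧ ∀ y ∈ K, ∀ z ∈ K, ‖u ε y - u ε z‖ ≤ Λ ε * ‖y - z‖ := by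
  obtain ⟨hsmooth, hbound⟩ := hu
  obtain ⟨N, C, ε₀, hε₀, hC⟩ := hbound K hK hKΩ 1
  refine ⟨fun ε => (|C| + 1) * ε ^ (-(N : ℤ)),
    ⟨N, |C| + 1, 1, one_pos, fun ε hε _ => ?_⟩, ?_⟩
  · rw [Real.norm_of_nonneg (by positivity)]
  filter_upwards [Ioo_mem_nhdsGT (lt_min hε₀ one_pos)] with ε ⟨hε, hεlt⟩
  have hu_ε := hsmooth ε ⟨hε, (hεlt.trans_le (min_le_right _ _)).le⟩
  refine ⟨by positivity, fun y hy z hz => ?_⟩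
  refine hKc.norm_image_sub_le_of_norm_fderiv_le
    (fun w hw => (hu_ε.differentiableOn (by simp)).differentiableAt (hΩ.mem_nhds (hKΩ hw)))
    (fun w hw => ?_) hz hy
  rw [← norm_iteratedFDeriv_one, ← iteratedFDerivWithin_of_isOpen 1 hΩ (hKΩ hw)]
  refine (hC ε hε (hεlt.trans_le (min_le_left _ _)) w hw).trans ?_
  gcongr
  exact (le_abs_self C).trans (lt_add_one _).le

lemma abs_sub_max_min_le {a b x s t : ℝ} (has : a + s ≤ x) (hbt : x + t ≤ b) :
    |x - max a (min x b)| ≤ |s| + |t| := by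
  have := abs_nonneg s; have := abs_nonneg t; have := neg_abs_le s; have := neg_abs_le t
  rw [abs_sub_le_iff]
  constructor
  · have : x - (|s| + |t|) ≤ min x b := le_min (by linarith) (by linarith)
    linarith [le_max_right a (min x b)]
  · have : max a (min x b) ≤ x + (|s| + |t|) :=
      max_le (by linarith) ((min_le_left x b).trans (by linarith))
    linarith

/-- if `∫_a^b |f| = 0` in ℝ̃ (with `a << b`), then `f(x_c) = 0` for every
compactly supported generalized point `x_c` with `a ≤ x_c ≤ b`. -/
theorem statement_2
    (a b x : ℝ → ℝ) (f : ℝ → ℝ → ℂ)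
    (haC : CompactlySupportedPoint (Set.univ : Set ℝ) a)
    (hbC : CompactlySupportedPoint (Set.univ : Set ℝ) b)
    (hab : TildeLt a b)
    (hf : IsModerate (Set.univ : Set ℝ) f)
    (hint : NumNegligible (fun ε => ∫ t in a ε..b ε, ‖f ε t‖))
    (hxC : CompactlySupportedPoint (Set.univ : Set ℝ) x)
    (hax : TildeLe a x) (hxb : TildeLe x b) :
    NumNegligible (fun ε => f ε (x ε)) := by
  obtain ⟨R, haR, hbR, hxR⟩ :=
    (haC.eventually_norm_le.and (hbC.eventually_norm_le.and hxC.eventually_norm_le)).exists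
  obtain ⟨Λ, hΛ, hlip⟩ := hf.exists_lipschitz_bound isOpen_univ (isCompact_closedBall 0 R)
    (subset_univ _) (convex_closedBall 0 R)
  obtain ⟨n₁, hn₁, hax⟩ := hax
  obtain ⟨n₂, hn₂, hxb⟩ := hxb
  set I := fun ε => ∫ t in a ε..b ε, ‖f ε t‖
  set y := fun ε => max (a ε) (min (x ε) (b ε))
  have hbounds : ∀ᶠ ε in 𝓝[>] 0,
      ‖f ε (y ε)‖ ^ 2 ≤ 16 * (I ε * Λ ε + I ε * (b ε - a ε)⁻¹ * (I ε * (b ε - a ε)⁻¹)) ∧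
      ‖f ε (x ε)‖ ≤ ‖f ε (y ε)‖ + (‖n₁ ε‖ + ‖n₂ ε‖) * Λ ε := by
    filter_upwards [haR, hbR, hxR, hlip, hab.eventually_lt, Ioo_mem_nhdsGT one_pos]
      with ε ha hb hx ⟨hΛε, hlipε⟩ hlt ⟨hε, hε1⟩
    rw [← mem_closedBall_zero_iff] at ha hb hx
    have hsub : Icc (a ε) (b ε) ⊆ Metric.closedBall 0 R :=
      (convex_closedBall 0 R).ordConnected.out ha hb
    have hy : y ε ∈ Icc (a ε) (b ε) := ⟨le_max_left _ _, max_le hlt.le (min_le_right _ _)⟩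
    have hcont : ContinuousOn (f ε) (Icc (a ε) (b ε)) :=
      (hf.1 ε ⟨hε, hε1.le⟩).continuousOn.mono (subset_univ _)
    refine ⟨(sq_norm_le_of_lipschitz_bound hcont hΛε
      (fun s hs t ht => hlipε s (hsub hs) t (hsub ht)) hy hlt).trans_eq (by ring), ?_⟩
    calc ‖f ε (x ε)‖ ≤ ‖f ε (y ε)‖ + ‖f ε (x ε) - f ε (y ε)‖ := norm_le_norm_add_norm_sub' _ _
      _ ≤ ‖f ε (y ε)‖ + Λ ε * ‖x ε - y ε‖ := by gcongr; exact hlipε _ hx _ (hsub hy)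
      _ ≤ ‖f ε (y ε)‖ + (‖n₁ ε‖ + ‖n₂ ε‖) * Λ ε := by
        rw [mul_comm]
        gcongr
        exact abs_sub_max_min_le (hax ε ⟨hε, hε1.le⟩) (hxb ε ⟨hε, hε1.le⟩)
  have hIΛ := hint.mul_numModerate hΛ
  have hIgap := hint.mul_numModerate hab.numModerate_inv_sub
  have hfy : NumNegligible fun ε => ‖f ε (y ε)‖ :=
    .of_pow two_ne_zero <| ((hIΛ.add (hIgap.mul_numModerate hIgap.numModerate)).const_mul 16)
      |>.of_eventually_norm_le <| hbounds.mono fun ε h => by simpa using h.1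
  exact (hfy.add ((hn₁.norm.add hn₂.norm).mul_numModerate hΛ)).of_eventually_norm_le
    (hbounds.mono fun ε h => h.2)
end
end

section
/- Let f ∈ G(ℝ⁺), where ℝ⁺ = (0,∞), and suppose f(λx) = f(x) holds in G(ℝ⁺) for every real λ > 0 (i.e. for every λ > 0 the net (f_ε(λx) − f_ε(x))_ε is negligible on ℝ⁺). Then f is a generalized constant: there exists a generalized number c such that f = c in G(ℝ⁺). -/
/-! Fix a compact `K ⊂ (0, ∞)` and an order `m`. The scalings `λ ∈ [1, 2]` for which
`‖f ε (λ z) - f ε z‖ ≤ (j + 1) ε ^ m` for all `z ∈ K` and `ε < 1 / (j + 1)` form closed sets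
covering `[1, 2]`, so by Baire one of them contains an interval `[a, b]`. Writing `ρ y` and `y`
as `ρ a · (y / a)` and `a · (y / a)` makes `f ε (ρ y) - f ε y` uniformly `O(ε ^ m)` for all
ratios `ρ ∈ [1, b / a]`, and a geometric chain of boundedly many such ratios joins every point
of `K` to `1`: thus `f - f(1)` is `O(ε ^ m)` on `K`. The derivatives follow from moderateness
through `h ‖g'(x)‖ ≤ 2 sup ‖g‖ + h² sup ‖g''‖` on `[x, x + h]`, with `h` a power of `ε`. -/

open Set Filter Topology MeasureTheory

noncomputable section

variable {E F : Type*} [NormedAddCommGroup E] [NormedSpace ℝ E]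
  [NormedAddCommGroup F] [NormedSpace ℝ F]

open Metric

def IsC0Negligible {X G : Type*} [TopologicalSpace X] [Norm G] (Ω : Set X) (u : ℝ → X → G) :
    Prop :=
  ∀ K : Set X, IsCompact K → K ⊆ Ω → ∀ m : ℕ, ∃ C ε₀ : ℝ, 0 < ε₀ ∧
    ∀ ε : ℝ, 0 < ε → ε < ε₀ → ∀ x ∈ K, ‖u ε x‖ ≤ C * ε ^ m

theorem IsNegligible.isC0Negligible {Ω : Set E} {u : ℝ → E → F} (hu : IsNegligible Ω u) :
    IsC0Negligible Ω u := fun K hK hKΩ m => by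
  simpa only [norm_iteratedFDerivWithin_zero] using hu.2 K hK hKΩ 0 m

theorem IsModerate.numModerate_apply {Ω : Set E} {u : ℝ → E → F} (hu : IsModerate Ω u)
    {x : E} (hx : x ∈ Ω) : NumModerate (fun ε => u ε x) := by
  obtain ⟨N, C, ε₀, hε₀, hbound⟩ :=
    hu.2 {x} isCompact_singleton (singleton_subset_iff.2 hx) 0
  exact ⟨N, C, ε₀, hε₀, fun ε hε hεε₀ => by
    simpa only [norm_iteratedFDerivWithin_zero] using hbound ε hε hεε₀ x rfl⟩

theorem iteratedDerivWithin_sub_const {n : ℕ} (hn : 0 < n) (g : ℝ → F) (c : F) (s : Set ℝ)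
    (x : ℝ) : iteratedDerivWithin n (fun z => g z - c) s x = iteratedDerivWithin n g s x := by
  simp_rw [sub_eq_neg_add]
  exact iteratedDerivWithin_const_add hn (-c)

theorem ContDiffOn.hasDerivWithinAt_iteratedDerivWithin {g : ℝ → F} {s : Set ℝ}
    (hg : ContDiffOn ℝ (⊤ : ℕ∞) g s) (hs : UniqueDiffOn ℝ s) (k : ℕ) {t : ℝ} (ht : t ∈ s) :
    HasDerivWithinAt (iteratedDerivWithin k g s) (iteratedDerivWithin (k + 1) g s t) s t := by
  rw [iteratedDerivWithin_succ]
  exact (hg.differentiableOn_iteratedDerivWithin (by exact_mod_cast WithTop.coe_lt_top k) hs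
    t ht).hasDerivWithinAt

theorem mul_norm_deriv_le_of_norm_le {g g' g'' : ℝ → F} {a b A M : ℝ} (hab : a ≤ b)
    (hg : ∀ t ∈ Icc a b, HasDerivWithinAt g (g' t) (Icc a b) t)
    (hg' : ∀ t ∈ Icc a b, HasDerivWithinAt g' (g'' t) (Icc a b) t)
    (hA : ∀ t ∈ Icc a b, ‖g t‖ ≤ A) (hM : ∀ t ∈ Icc a b, ‖g'' t‖ ≤ M) :
    (b - a) * ‖g' a‖ ≤ 2 * A + M * (b - a) ^ 2 := by
  have ha : a ∈ Icc a b := ⟨le_rfl, hab⟩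
  have hb : b ∈ Icc a b := ⟨hab, le_rfl⟩
  have hM0 : 0 ≤ M := (norm_nonneg _).trans (hM a ha)
  have hlip : ∀ t ∈ Icc a b, ‖g' t - g' a‖ ≤ M * (b - a) := fun t ht =>
    (norm_image_sub_le_of_norm_deriv_le_segment' hg' (fun s hs => hM s (Ico_subset_Icc_self hs))
      t ht).trans (mul_le_mul_of_nonneg_left (by linarith [ht.2]) hM0)
  -- mean value theorem for `t ↦ g t - t • g' a`, whose derivative is `g' t - g' a`
  have htaylor : ‖(g b - b • g' a) - (g a - a • g' a)‖ ≤ M * (b - a) * (b - a) :=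
    norm_image_sub_le_of_norm_deriv_le_segment' (f := fun t => g t - t • g' a)
      (fun t ht => by
        simpa only [one_smul, id_eq] using
          (hg t ht).fun_sub ((hasDerivWithinAt_id t _).smul_const (g' a)))
      (fun t ht => hlip t (Ico_subset_Icc_self ht)) b hb
  calc (b - a) * ‖g' a‖ = ‖(b - a) • g' a‖ := by
        rw [norm_smul, Real.norm_of_nonneg (sub_nonneg.2 hab)]
    _ = ‖(g b - g a) - ((g b - b • g' a) - (g a - a • g' a))‖ := by
        congr 1; rw [sub_smul]; abel
    _ ≤ ‖g b‖ + ‖g a‖ + M * (b - a) * (b - a) :=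
        (norm_sub_le _ _).trans (add_le_add (norm_sub_le _ _) htaylor)
    _ ≤ 2 * A + M * (b - a) ^ 2 := by nlinarith [hA a ha, hA b hb]

theorem IsModerate.isC0Negligible_iteratedDerivWithin_succ {Ω : Set ℝ} (hΩ : IsOpen Ω)
    {u : ℝ → ℝ → F} (hu : IsModerate Ω u) {c : ℝ → F} {n : ℕ}
    (hn : IsC0Negligible Ω (fun ε => iteratedDerivWithin n (fun x => u ε x - c ε) Ω)) :
    IsC0Negligible Ω (fun ε => iteratedDerivWithin (n + 1) (fun x => u ε x - c ε) Ω) := by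
  intro K hK hKΩ m
  obtain ⟨δ, hδ, hKδ⟩ := hK.exists_cthickening_subset_open hΩ hKΩ
  obtain ⟨N, C₂, ε₂, hε₂, hbound₂⟩ := hu.2 _ hK.cthickening hKδ (n + 2)
  obtain ⟨C₁, ε₁, hε₁, hbound₁⟩ := hn _ hK.cthickening hKδ (2 * m + N + 1)
  refine ⟨2 * C₁ + |C₂|, min (min ε₁ ε₂) (min δ 1), by positivity, fun ε hε hεε₀ x hx => ?_⟩
  simp only [lt_min_iff] at hεε₀
  obtain ⟨⟨hεε₁, hεε₂⟩, hεδ, hε1⟩ := hεε₀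
  -- the step `h` is chosen so that `ε ^ (2 * m + N + 1) / h` and `ε ^ (-N) * h` are `O(ε ^ m)`
  set h := ε ^ (m + N + 1)
  have hh : 0 < h := by positivity
  have hseg : Icc x (x + h) ⊆ cthickening δ K := by
    refine (Icc_subset_Icc (show x - h ≤ x by linarith) le_rfl).trans ?_
    rw [← Real.closedBall_eq_Icc]
    exact closedBall_subset_cthickening hx h |>.trans
      (cthickening_mono ((pow_le_of_le_one hε.le hε1.le (by omega)).trans hεδ.le) K)
  have hsmooth : ContDiffOn ℝ (⊤ : ℕ∞) (fun y => u ε y - c ε) Ω :=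
    (hu.1 ε ⟨hε, hε1.le⟩).sub contDiffOn_const
  have hderiv (k : ℕ) (t : ℝ) (ht : t ∈ Icc x (x + h)) :=
    (hsmooth.hasDerivWithinAt_iteratedDerivWithin hΩ.uniqueDiffOn k (hKδ (hseg ht))).mono
      (hseg.trans hKδ)
  have key := mul_norm_deriv_le_of_norm_le (by linarith) (hderiv n) (hderiv (n + 1))
    (fun t ht => hbound₁ ε hε hεε₁ t (hseg ht)) (fun t ht => by
      rw [iteratedDerivWithin_sub_const (by omega),
        ← norm_iteratedFDerivWithin_eq_norm_iteratedDerivWithin]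
      exact hbound₂ ε hε hεε₂ t (hseg ht))
  have hsplit : 2 * (C₁ * ε ^ (2 * m + N + 1)) + C₂ * ε ^ (-(N : ℤ)) * h ^ 2
      = h * (2 * C₁ * ε ^ m + C₂ * ε ^ (m + 1)) := by
    rw [zpow_neg, zpow_natCast]
    field_simp
    ring
  rw [add_sub_cancel_left, hsplit] at key
  calc ‖iteratedDerivWithin (n + 1) (fun x => u ε x - c ε) Ω x‖
      ≤ 2 * C₁ * ε ^ m + C₂ * ε ^ (m + 1) := le_of_mul_le_mul_left key hh
    _ ≤ 2 * C₁ * ε ^ m + |C₂| * ε ^ m := by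
      gcongr 2 * C₁ * ε ^ m + ?_
      exact (mul_le_mul_of_nonneg_right (le_abs_self C₂) (by positivity)).trans
        (mul_le_mul_of_nonneg_left (pow_le_pow_of_le_one hε.le hε1.le m.le_succ) (abs_nonneg _))
    _ = (2 * C₁ + |C₂|) * ε ^ m := by ring

theorem IsModerate.isNegligible_sub_of_isC0Negligible {Ω : Set ℝ} (hΩ : IsOpen Ω)
    {u : ℝ → ℝ → F} (hu : IsModerate Ω u) {c : ℝ → F}
    (h0 : IsC0Negligible Ω (fun ε x => u ε x - c ε)) :
    IsNegligible Ω (fun ε x => u ε x - c ε) := by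
  refine ⟨fun ε hε => (hu.1 ε hε).sub contDiffOn_const, fun K hK hKΩ n => ?_⟩
  have hn : IsC0Negligible Ω (fun ε => iteratedDerivWithin n (fun x => u ε x - c ε) Ω) := by
    induction n with
    | zero => simpa only [iteratedDerivWithin_zero] using h0
    | succ n ih => exact hu.isC0Negligible_iteratedDerivWithin_succ hΩ ih
  simpa only [norm_iteratedFDerivWithin_eq_norm_iteratedDerivWithin] using hn K hK hKΩ

theorem exists_interior_inter_nonempty_of_subset_iUnion_closed {X : Type*} [TopologicalSpace X]
    [BaireSpace X] {A : ℕ → Set X} (hA : ∀ j, IsClosed (A j)) {U : Set X} (hU : IsOpen U)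
    (hne : U.Nonempty) (hcover : U ⊆ ⋃ j, A j) : ∃ j, (interior (A j) ∩ U).Nonempty := by
  have hunion : ⋃ j, (A j ∪ Uᶜ) = univ := eq_univ_of_forall fun x => by
    by_cases hx : x ∈ U
    · obtain ⟨j, hj⟩ := mem_iUnion.1 (hcover hx)
      exact mem_iUnion.2 ⟨j, Or.inl hj⟩
    · exact mem_iUnion.2 ⟨0, Or.inr hx⟩
  obtain ⟨x, hxU, hx⟩ := (dense_iUnion_interior_of_closed
    (fun j => (hA j).union hU.isClosed_compl) hunion).inter_open_nonempty U hU hne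
  obtain ⟨j, hj⟩ := mem_iUnion.1 hx
  refine ⟨j, x, interior_maximal (fun y hy => ?_) (isOpen_interior.inter hU) ⟨hj, hxU⟩, hxU⟩
  exact (interior_subset hy.1).resolve_right (not_not.2 hy.2)

theorem norm_sub_le_of_ratio_bound {G : Type*} [SeminormedAddCommGroup G] {g : ℝ → G}
    {q B s t : ℝ} {k : ℕ} (hq : 0 ≤ q) (hs : 0 < s) (hst : s ≤ t) (hk : t / s ≤ q ^ k)
    (hB : ∀ ρ ∈ Icc 1 q, ∀ y ∈ Icc s t, ‖g (ρ * y) - g y‖ ≤ B) : ‖g t - g s‖ ≤ k * B := by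
  rcases k.eq_zero_or_pos with rfl | hk0
  · rw [le_antisymm (by rwa [pow_zero, div_le_one hs] at hk) hst]
    simp
  -- the geometric chain `s, ρ s, …, ρ ^ k s = t` with ratio `ρ = (t / s) ^ (1 / k) ≤ q`
  set ρ := (t / s) ^ ((k : ℝ)⁻¹)
  have hts : 0 ≤ t / s := (div_pos (hs.trans_le hst) hs).le
  have hρk : ρ ^ k * s = t := by
    rw [Real.rpow_inv_natCast_pow hts hk0.ne', div_mul_cancel₀ t hs.ne']
  have hρ1 : 1 ≤ ρ := Real.one_le_rpow ((one_le_div hs).2 hst) (by positivity)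
  have hρq : ρ ≤ q := (pow_le_pow_iff_left₀ (by positivity) hq hk0.ne').1 <| by
    rwa [Real.rpow_inv_natCast_pow hts hk0.ne']
  calc ‖g t - g s‖ = ‖∑ i ∈ Finset.range k, (g (ρ ^ (i + 1) * s) - g (ρ ^ i * s))‖ := by
        rw [Finset.sum_range_sub (fun i => g (ρ ^ i * s)), hρk, pow_zero, one_mul]
    _ ≤ ∑ i ∈ Finset.range k, B := norm_sum_le_of_le _ fun i hi => by
        rw [pow_succ', mul_assoc]
        refine hB ρ ⟨hρ1, hρq⟩ _ ⟨le_mul_of_one_le_left hs.le (one_le_pow₀ hρ1), ?_⟩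
        calc ρ ^ i * s ≤ ρ ^ k * s :=
              mul_le_mul_of_nonneg_right (pow_le_pow_right₀ hρ1 (Finset.mem_range.1 hi).le) hs.le
          _ = t := hρk
    _ = k * B := by simp

section ScaleInvariant

variable {G : Type*} [NormedAddCommGroup G] {f : ℝ → ℝ → G}

theorem exists_uniform_scaling_bound (hcont : ∀ ε ∈ Ioc (0 : ℝ) 1, ContinuousOn (f ε) (Ioi 0))
    (hinv : ∀ lam : ℝ, 0 < lam → IsC0Negligible (Ioi 0) (fun ε x => f ε (lam * x) - f ε x))
    {K : Set ℝ} (hK : IsCompact K) (hKpos : K ⊆ Ioi 0) (m : ℕ) :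
    ∃ a b, 1 ≤ a ∧ a < b ∧ b ≤ 2 ∧ ∃ C ε₀ : ℝ, 0 < ε₀ ∧ ∀ ε : ℝ, 0 < ε → ε < ε₀ →
      ∀ l ∈ Icc a b, ∀ z ∈ K, ‖f ε (l * z) - f ε z‖ ≤ C * ε ^ m := by
  set A : ℕ → Set ℝ := fun j => ⋂ ε ∈ Ioo 0 (1 / (j + 1 : ℝ)), ⋂ z ∈ K,
    Icc 1 2 ∩ (fun l => ‖f ε (l * z) - f ε z‖) ⁻¹' Iic ((j + 1) * ε ^ m)
  have hA (j : ℕ) : IsClosed (A j) := isClosed_biInter fun ε hε => isClosed_biInter fun z hz => by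
    have hε1 : ε ≤ 1 := hε.2.le.trans (div_le_one_of_le₀ (by simp) (by positivity))
    refine ContinuousOn.preimage_isClosed_of_isClosed ?_ isClosed_Icc isClosed_Iic
    exact ((hcont ε ⟨hε.1, hε1⟩).comp (continuousOn_id.mul continuousOn_const)
      fun l hl => mul_pos (one_pos.trans_le hl.1) (hKpos hz)).sub continuousOn_const |>.norm
  have hcover : Ioo 1 2 ⊆ ⋃ j, A j := by
    intro l hl
    obtain ⟨C, ε₀, hε₀, hbound⟩ := hinv l (one_pos.trans hl.1) K hK hKpos m
    obtain ⟨j, hj⟩ := exists_nat_gt (max C (1 / ε₀))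
    have hjε₀ : 1 / (j + 1 : ℝ) < ε₀ := by
      have := (div_lt_iff₀ hε₀).1 ((le_max_right _ _).trans_lt hj)
      rw [div_lt_iff₀ (by positivity)]
      nlinarith
    simp only [A, mem_iUnion, mem_iInter]
    refine ⟨j, fun ε hε z hz => ⟨Ioo_subset_Icc_self hl, ?_⟩⟩
    exact (hbound ε hε.1 (hε.2.trans hjε₀) z hz).trans
      (mul_le_mul_of_nonneg_right (by linarith [le_max_left C (1 / ε₀)]) (pow_nonneg hε.1.le m))
  obtain ⟨j, l₀, hl₀⟩ := exists_interior_inter_nonempty_of_subset_iUnion_closed hA isOpen_Ioo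
    ⟨3 / 2, by norm_num, by norm_num⟩ hcover
  obtain ⟨δ, hδ, hball⟩ := isOpen_iff.1 (isOpen_interior.inter isOpen_Ioo) l₀ hl₀
  have hIcc : Icc (l₀ - δ / 2) (l₀ + δ / 2) ⊆ interior (A j) ∩ Ioo 1 2 := by
    rw [← Real.closedBall_eq_Icc]
    exact (closedBall_subset_ball (half_lt_self hδ)).trans hball
  refine ⟨l₀ - δ / 2, l₀ + δ / 2, (hIcc ⟨le_rfl, by linarith⟩).2.1.le, by linarith,
    (hIcc ⟨by linarith, le_rfl⟩).2.2.le, j + 1, 1 / (j + 1), by positivity,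
    fun ε hε hεj l hl z hz => ?_⟩
  have hlA := interior_subset (hIcc hl).1
  simp only [A, mem_iInter] at hlA
  exact (hlA ε ⟨hε, hεj⟩ z hz).2

theorem exists_ratio_bound (hcont : ∀ ε ∈ Ioc (0 : ℝ) 1, ContinuousOn (f ε) (Ioi 0))
    (hinv : ∀ lam : ℝ, 0 < lam → IsC0Negligible (Ioi 0) (fun ε x => f ε (lam * x) - f ε x))
    {r : ℝ} (R : ℝ) (hr : 0 < r) (m : ℕ) :
    ∃ q, 1 < q ∧ ∃ C ε₀ : ℝ, 0 < ε₀ ∧ ∀ ε : ℝ, 0 < ε → ε < ε₀ →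
      ∀ ρ ∈ Icc 1 q, ∀ y ∈ Icc r R, ‖f ε (ρ * y) - f ε y‖ ≤ C * ε ^ m := by
  obtain ⟨a, b, ha, hab, hb, C, ε₀, hε₀, hbound⟩ := exists_uniform_scaling_bound hcont hinv
    (isCompact_Icc (a := r / 2) (b := R)) (fun z hz => by simp only [mem_Ioi]; linarith [hz.1]) m
  have ha0 : 0 < a := by linarith
  refine ⟨b / a, (one_lt_div ha0).2 hab, 2 * C, ε₀, hε₀, fun ε hε hεε₀ ρ hρ y hy => ?_⟩
  have hy0 : 0 < y := by linarith [hy.1]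
  have hz : y / a ∈ Icc (r / 2) R :=
    ⟨(div_le_div_of_nonneg_left hy0.le ha0 (hab.le.trans hb)).trans' (by linarith [hy.1]),
      (div_le_self hy0.le ha).trans hy.2⟩
  have hρa : ρ * a ∈ Icc a b := ⟨le_mul_of_one_le_left ha0.le hρ.1, (le_div_iff₀ ha0).1 hρ.2⟩
  have h1 := hbound ε hε hεε₀ _ hρa _ hz
  have h2 := hbound ε hε hεε₀ a ⟨le_rfl, hab.le⟩ _ hz
  rw [mul_assoc, mul_div_cancel₀ y ha0.ne'] at h1
  rw [mul_div_cancel₀ y ha0.ne'] at h2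
  calc ‖f ε (ρ * y) - f ε y‖ = ‖(f ε (ρ * y) - f ε (y / a)) - (f ε y - f ε (y / a))‖ := by
        congr 1; abel
    _ ≤ C * ε ^ m + C * ε ^ m := (norm_sub_le _ _).trans (add_le_add h1 h2)
    _ = 2 * C * ε ^ m := by ring

theorem isC0Negligible_sub_apply_one (hcont : ∀ ε ∈ Ioc (0 : ℝ) 1, ContinuousOn (f ε) (Ioi 0))
    (hinv : ∀ lam : ℝ, 0 < lam → IsC0Negligible (Ioi 0) (fun ε x => f ε (lam * x) - f ε x)) :
    IsC0Negligible (Ioi 0) (fun ε x => f ε x - f ε 1) := by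
  intro K hK hKpos m
  obtain ⟨r, hrK, hr⟩ := (hK.insert 1).exists_isMinOn (insert_nonempty 1 K) continuousOn_id
  obtain ⟨R, -, hR⟩ := (hK.insert 1).exists_isMaxOn (insert_nonempty 1 K) continuousOn_id
  have hr0 : 0 < r := insert_subset_iff.2 ⟨one_pos, hKpos⟩ hrK
  have hmem (x : ℝ) (hx : x ∈ insert 1 K) : x ∈ Icc r R := ⟨hr hx, hR hx⟩
  obtain ⟨q, hq, C, ε₀, hε₀, hratio⟩ := exists_ratio_bound hcont hinv R hr0 m
  obtain ⟨k, hk⟩ := pow_unbounded_of_one_lt (R / r) hq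
  refine ⟨k * C, ε₀, hε₀, fun ε hε hεε₀ x hx => ?_⟩
  have hchain (s t : ℝ) (hs : s ∈ Icc r R) (ht : t ∈ Icc r R) (hst : s ≤ t) :
      ‖f ε t - f ε s‖ ≤ k * (C * ε ^ m) :=
    norm_sub_le_of_ratio_bound (by linarith) (hr0.trans_le hs.1) hst
      ((div_le_div₀ (by linarith [ht.1, ht.2]) ht.2 hr0 hs.1).trans hk.le)
      fun ρ hρ y hy => hratio ε hε hεε₀ ρ hρ y ⟨hs.1.trans hy.1, hy.2.trans ht.2⟩
  rw [mul_assoc]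
  rcases le_total 1 x with h | h
  · exact hchain 1 x (hmem 1 (mem_insert 1 K)) (hmem x (mem_insert_of_mem 1 hx)) h
  · rw [norm_sub_rev]
    exact hchain x 1 (hmem x (mem_insert_of_mem 1 hx)) (hmem 1 (mem_insert 1 K)) h

end ScaleInvariant

/-- a generalized function on ℝ⁺ = (0,∞) invariant under all standard
scalings is a generalized constant. -/
theorem statement_3
    (f : ℝ → ℝ → ℂ)
    (hf : IsModerate (Set.Ioi (0:ℝ)) f)
    (hinv : ∀ lam : ℝ, 0 < lam →
      IsNegligible (Set.Ioi (0:ℝ)) (fun ε x => f ε (lam * x) - f ε x)) :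
    ∃ c : ℝ → ℂ, NumModerate c ∧
      IsNegligible (Set.Ioi (0:ℝ)) (fun ε x => f ε x - c ε) := by
  have hcont (ε : ℝ) (hε : ε ∈ Ioc (0 : ℝ) 1) : ContinuousOn (f ε) (Ioi 0) :=
    (hf.1 ε hε).continuousOn
  refine ⟨fun ε => f ε 1, hf.numModerate_apply (mem_Ioi.2 one_pos), ?_⟩
  exact hf.isNegligible_sub_of_isC0Negligible isOpen_Ioi
    (isC0Negligible_sub_apply_one hcont fun lam hlam => (hinv lam hlam).isC0Negligible)
end
end

section
/- Any generalized function u ∈ G(ℝ^d) which is invariant under standard scaling is a generalized constant: if u(λx) = u(x) holds in G(ℝ^d) for every real λ > 0 (i.e. for every λ > 0 the net (u_ε(λx) − u_ε(x))_ε is negligible), then there exists a generalized number c such that u = c in G(ℝ^d). -/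
open Set Filter Topology MeasureTheory

noncomputable section

variable {E F : Type*} [NormedAddCommGroup E] [NormedSpace ℝ E]
  [NormedAddCommGroup F] [NormedSpace ℝ F]

/-!
Derivatives of order `n ≥ 1` scale like `c ^ n` under `x ↦ c • x`. Writing `g_ε = ‖Dⁿu_ε‖`,
invariance under one contraction `c = 1/2` gives `g_ε(x) ≤ 2⁻ⁿ g_ε(x/2) + O(ε^m)` on every
ball around the origin; iterating this and using the moderate a priori bound on `g_ε` shows
`g_ε = O(ε^m)` there. So all derivatives of positive order are negligible, and by the mean value
theorem `u_ε - u_ε(0)` is negligible as well: `u` is the generalized constant `(u_ε(0))_ε`.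
-/

open Metric

theorem le_div_one_sub_of_le_mul_comp_add {α : Type*} {S : Set α} {T : α → α}
    (hT : MapsTo T S S) {g : α → ℝ} {M q δ : ℝ} (hq₀ : 0 ≤ q) (hq₁ : q < 1)
    (hM : ∀ y ∈ S, g y ≤ M) (hg : ∀ y ∈ S, g y ≤ q * g (T y) + δ) {y : α} (hy : y ∈ S) :
    g y ≤ δ / (1 - q) := by
  -- `a` is the fixed point of `t ↦ q * t + δ`, so `g - a` contracts by the factor `q`.
  set a := δ / (1 - q)
  have hδ : δ = a - q * a := by
    simp only [a]; field_simp [(sub_pos.2 hq₁).ne']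
  have hk : ∀ k : ℕ, ∀ y ∈ S, g y - a ≤ q ^ k * (M - a) := by
    intro k
    induction k with
    | zero => intro y hy; simpa using hM y hy
    | succ k ih =>
      intro y hy
      calc g y - a ≤ q * (g (T y) - a) := by linarith [hg y hy]
        _ ≤ q * (q ^ k * (M - a)) := mul_le_mul_of_nonneg_left (ih _ (hT hy)) hq₀
        _ = q ^ (k + 1) * (M - a) := by ring
  have hlim : Tendsto (fun k : ℕ => q ^ k * (M - a)) atTop (𝓝 0) := by
    simpa using (tendsto_pow_atTop_nhds_zero_of_lt_one hq₀ hq₁).mul_const (M - a)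
  linarith [ge_of_tendsto' hlim fun k => hk k y hy]

theorem mapsTo_smul_closedBall {E : Type*} [SeminormedAddCommGroup E] [NormedSpace ℝ E]
    {c : ℝ} (hc : |c| ≤ 1) (R : ℝ) : MapsTo (c • ·) (closedBall (0 : E) R) (closedBall 0 R) := by
  intro y hy
  rw [mem_closedBall_zero_iff] at hy ⊢
  calc ‖c • y‖ = |c| * ‖y‖ := by rw [norm_smul, Real.norm_eq_abs]
    _ ≤ 1 * R := mul_le_mul hc hy (norm_nonneg y) zero_le_one
    _ = R := one_mul R

theorem norm_iteratedFDeriv_le_comp_smul_add {n : ℕ} {f : E → F} (hf : ContDiff ℝ n f)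
    (c : ℝ) (x : E) :
    ‖iteratedFDeriv ℝ n f x‖ ≤ |c| ^ n * ‖iteratedFDeriv ℝ n f (c • x)‖ +
      ‖iteratedFDeriv ℝ n (fun y => f (c • y) - f y) x‖ := by
  have hfc : ContDiff ℝ n (fun y => f (c • y)) := hf.comp (contDiff_const_smul c)
  have hsub : iteratedFDeriv ℝ n (fun y => f (c • y) - f y) x =
      c ^ n • iteratedFDeriv ℝ n f (c • x) - iteratedFDeriv ℝ n f x := by
    rw [show (fun y => f (c • y) - f y) = (fun y => f (c • y)) - f from rfl,
      iteratedFDeriv_sub_apply hfc.contDiffAt hf.contDiffAt, iteratedFDeriv_comp_const_smul c hf]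
  rw [← sub_sub_cancel (c ^ n • iteratedFDeriv ℝ n f (c • x)) (iteratedFDeriv ℝ n f x), ← hsub]
  refine (norm_sub_le _ _).trans_eq ?_
  rw [norm_smul, norm_pow, Real.norm_eq_abs]

theorem iteratedFDeriv_succ_sub_const (n : ℕ) (f : E → F) (c : F) :
    iteratedFDeriv ℝ (n + 1) (fun y => f y - c) = iteratedFDeriv ℝ (n + 1) f := by
  ext1 x
  simp only [iteratedFDeriv_succ_eq_comp_right, fderiv_sub_const]

def IsNegligibleDerivOn (v : ℝ → E → F) (n : ℕ) (K : Set E) : Prop :=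
  ∀ m : ℕ, ∃ C ε₀ : ℝ, 0 < ε₀ ∧
    ∀ ε : ℝ, 0 < ε → ε < ε₀ → ∀ x ∈ K, ‖iteratedFDeriv ℝ n (v ε) x‖ ≤ C * ε ^ m

theorem IsNegligible.isNegligibleDerivOn {v : ℝ → E → F} (hv : IsNegligible univ v)
    {K : Set E} (hK : IsCompact K) (n : ℕ) : IsNegligibleDerivOn v n K := by
  intro m
  simpa only [iteratedFDerivWithin_univ] using hv.2 K hK (subset_univ K) n m

theorem isNegligible_univ_of_isNegligibleDerivOn_closedBall {v : ℝ → E → F}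
    (hv : ∀ ε ∈ Ioc (0 : ℝ) 1, ContDiff ℝ (⊤ : ℕ∞) (v ε))
    (h : ∀ R : ℝ, ∀ n : ℕ, IsNegligibleDerivOn v n (closedBall 0 R)) :
    IsNegligible univ v := by
  refine ⟨fun ε hε => (hv ε hε).contDiffOn, fun K hK _ n m => ?_⟩
  obtain ⟨R, hKR⟩ := hK.isBounded.subset_closedBall 0
  obtain ⟨C, ε₀, hε₀, hC⟩ := h R n m
  refine ⟨C, ε₀, hε₀, fun ε hε hεε₀ x hx => ?_⟩
  rw [iteratedFDerivWithin_univ]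
  exact hC ε hε hεε₀ x (hKR hx)

theorem IsNegligibleDerivOn.sub_const {v : ℝ → E → F} {n : ℕ} {K : Set E}
    (h : IsNegligibleDerivOn v (n + 1) K) (c : ℝ → F) :
    IsNegligibleDerivOn (fun ε x => v ε x - c ε) (n + 1) K := by
  simpa only [IsNegligibleDerivOn, iteratedFDeriv_succ_sub_const] using h

theorem IsNegligibleDerivOn.sub_apply_zero {v : ℝ → E → F}
    (hv : ∀ ε ∈ Ioc (0 : ℝ) 1, Differentiable ℝ (v ε)) {R : ℝ}
    (h : IsNegligibleDerivOn v 1 (closedBall 0 R)) :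
    IsNegligibleDerivOn (fun ε x => v ε x - v ε 0) 0 (closedBall 0 R) := by
  intro m
  obtain ⟨C, ε₀, hε₀, hC⟩ := h m
  refine ⟨C * R, min ε₀ 1, by positivity, fun ε hε hεlt x hx => ?_⟩
  simp only [lt_min_iff] at hεlt
  have hfderiv : ∀ y ∈ closedBall (0 : E) R, ‖fderiv ℝ (v ε) y‖ ≤ C * ε ^ m := fun y hy => by
    simpa only [norm_iteratedFDeriv_one] using hC ε hε hεlt.1 y hy
  have hx₀ : (0 : E) ∈ closedBall 0 R := mem_closedBall_self (nonneg_of_mem_closedBall hx)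
  have hmvt := (convex_closedBall (0 : E) R).norm_image_sub_le_of_norm_fderiv_le
    (fun y _ => (hv ε ⟨hε, hεlt.2.le⟩).differentiableAt) hfderiv hx₀ hx
  rw [norm_iteratedFDeriv_zero]
  calc ‖v ε x - v ε 0‖ ≤ C * ε ^ m * ‖x - 0‖ := hmvt
    _ ≤ C * ε ^ m * R := by
      refine mul_le_mul_of_nonneg_left ?_ ((norm_nonneg _).trans (hfderiv 0 hx₀))
      simpa using hx
    _ = C * R * ε ^ m := by ring

theorem IsModerate.isNegligibleDerivOn_closedBall [ProperSpace E] {u : ℝ → E → F}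
    (hu : IsModerate univ u) {c : ℝ} (hc : |c| < 1)
    (hinv : IsNegligible univ (fun ε x => u ε (c • x) - u ε x)) {n : ℕ} (hn : n ≠ 0) (R : ℝ) :
    IsNegligibleDerivOn u n (closedBall 0 R) := by
  intro m
  obtain ⟨C, ε₁, hε₁, hC⟩ := hinv.isNegligibleDerivOn (isCompact_closedBall 0 R) n m
  obtain ⟨N, M, ε₂, hε₂, hM⟩ := hu.2 _ (isCompact_closedBall 0 R) (subset_univ _) n
  refine ⟨C / (1 - |c| ^ n), min (min ε₁ ε₂) 1, by positivity, fun ε hε hεlt x hx => ?_⟩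
  simp only [lt_min_iff] at hεlt
  have hf : ContDiff ℝ n (u ε) :=
    (contDiffOn_univ.mp (hu.1 ε ⟨hε, hεlt.2.le⟩)).of_le (by exact_mod_cast le_top)
  rw [div_mul_eq_mul_div]
  refine le_div_one_sub_of_le_mul_comp_add (g := fun y => ‖iteratedFDeriv ℝ n (u ε) y‖)
    (M := M * ε ^ (-(N : ℤ))) (mapsTo_smul_closedBall hc.le R) (by positivity)
    (pow_lt_one₀ (abs_nonneg c) hc hn) (fun y hy => ?_) (fun y hy => ?_) hx
  · simpa only [iteratedFDerivWithin_univ] using hM ε hε hεlt.1.2 y hy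
  · exact (norm_iteratedFDeriv_le_comp_smul_add hf c y).trans
      (add_le_add_right (hC ε hε hεlt.1.1 y hy) _)

/-- a generalized function on ℝ^d invariant under all standard scalings
is a generalized constant. -/
theorem statement_4
    (d : ℕ) (u : ℝ → EuclideanSpace ℝ (Fin d) → ℂ)
    (hu : IsModerate (Set.univ : Set (EuclideanSpace ℝ (Fin d))) u)
    (hinv : ∀ lam : ℝ, 0 < lam →
      IsNegligible (Set.univ : Set (EuclideanSpace ℝ (Fin d)))
        (fun ε x => u ε (lam • x) - u ε x)) :
    ∃ c : ℝ → ℂ, NumModerate c ∧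
      IsNegligible (Set.univ : Set (EuclideanSpace ℝ (Fin d)))
        (fun ε x => u ε x - c ε) := by
  have hsmooth : ∀ ε ∈ Ioc (0 : ℝ) 1, ContDiff ℝ (⊤ : ℕ∞) (u ε) :=
    fun ε hε => contDiffOn_univ.mp (hu.1 ε hε)
  have hderiv : ∀ R : ℝ, ∀ n ≠ 0, IsNegligibleDerivOn u n (closedBall 0 R) := fun R n hn =>
    hu.isNegligibleDerivOn_closedBall (c := 1 / 2) (by norm_num [abs_of_pos])
      (hinv _ (by norm_num)) hn R
  refine ⟨fun ε => u ε 0, ?_, ?_⟩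
  · obtain ⟨N, C, ε₀, hε₀, hC⟩ := hu.2 {0} isCompact_singleton (subset_univ _) 0
    refine ⟨N, C, ε₀, hε₀, fun ε hε hεε₀ => ?_⟩
    simpa using hC ε hε hεε₀ 0 rfl
  refine isNegligible_univ_of_isNegligibleDerivOn_closedBall
    (fun ε hε => (hsmooth ε hε).sub contDiff_const) fun R n => ?_
  rcases n with _ | n
  · exact (hderiv R 1 one_ne_zero).sub_apply_zero
      fun ε hε => (hsmooth ε hε).differentiable (by simp)
  · exact (hderiv R (n + 1) n.succ_ne_zero).sub_const _
end
end

section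
/- Let u ∈ G(ℝ^d), u ≠ 0, be homogeneous of degree α ∈ ℝ (i.e. for every real λ > 0, u(λx) = λ^α u(x) holds in G(ℝ^d)). Then α is a non-negative integer. -/
/-!
Suppose `α ∉ ℕ` and put `P = ⌈α⌉₊`. Comparing `u(2x)` with `2^α u(x)` at `x = 0` gives
`(2^j - 2^α) ∂^j u_ε(0) ≈ 0`, so every derivative of `u_ε` at the origin is negligible; Taylor's
formula and the moderate bound on `∂^(n+P+1) u_ε` then give
`|∂^n u_ε(z)| ≤ C |z|^(P+1) ε^(-N)` up to a negligible net near the origin.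
Homogeneity with `λ = 1/2` gives `|∂^n u_ε(x)| ≤ 2^P |∂^n u_ε(x/2)|` up to a negligible net.
Iterating this `k ≈ (N+m) log₂(1/ε)` times moves `x` into the ball of radius `ε^(N+m)`, where the
Taylor bound beats the accumulated factor `2^(Pk) ≈ ε^(-(N+m)P)`. Hence `u` is negligible.
-/

open Set Filter Topology MeasureTheory

noncomputable section

variable {E F : Type*} [NormedAddCommGroup E] [NormedSpace ℝ E]
  [NormedAddCommGroup F] [NormedSpace ℝ F]

open Metric

def NegligiblyBoundedOn {X : Type*} (S : Set X) (φ : ℝ → X → ℝ) : Prop :=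
  ∀ m : ℕ, ∃ C : ℝ, ∀ᶠ ε in 𝓝[>] 0, ∀ x ∈ S, φ ε x ≤ C * ε ^ m

namespace NegligiblyBoundedOn

variable {X : Type*} {S T : Set X} {φ ψ : ℝ → X → ℝ}

lemma mono (hψ : NegligiblyBoundedOn T ψ) (hST : S ⊆ T)
    (h : ∀ᶠ ε in 𝓝[>] 0, ∀ x ∈ S, φ ε x ≤ ψ ε x) : NegligiblyBoundedOn S φ := fun m => by
  obtain ⟨C, hC⟩ := hψ m
  exact ⟨C, by filter_upwards [hC, h] with ε hCε hε x hx using (hε x hx).trans (hCε x (hST hx))⟩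

lemma zero : NegligiblyBoundedOn S 0 := fun _ => ⟨0, by simp⟩

lemma add (hφ : NegligiblyBoundedOn S φ) (hψ : NegligiblyBoundedOn S ψ) :
    NegligiblyBoundedOn S (φ + ψ) := fun m => by
  obtain ⟨C, hC⟩ := hφ m
  obtain ⟨D, hD⟩ := hψ m
  refine ⟨C + D, ?_⟩
  filter_upwards [hC, hD] with ε hCε hDε x hx
  simpa only [Pi.add_apply, add_mul] using add_le_add (hCε x hx) (hDε x hx)

lemma sum {ι : Type*} (s : Finset ι) {φ : ι → ℝ → X → ℝ}
    (h : ∀ i ∈ s, NegligiblyBoundedOn S (φ i)) : NegligiblyBoundedOn S (∑ i ∈ s, φ i) :=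
  Finset.sum_induction _ _ (fun _ _ => add) zero h

lemma const_mul (hφ : NegligiblyBoundedOn S φ) {c : ℝ} (hc : 0 ≤ c) :
    NegligiblyBoundedOn S fun ε x => c * φ ε x := fun m => by
  obtain ⟨C, hC⟩ := hφ m
  refine ⟨c * C, ?_⟩
  filter_upwards [hC] with ε hCε x hx
  rw [mul_assoc]
  exact mul_le_mul_of_nonneg_left (hCε x hx) hc

lemma eval_of_mem (hφ : NegligiblyBoundedOn T φ) {y : X} (hy : y ∈ T) :
    NegligiblyBoundedOn S fun ε _ => φ ε y := fun m => by
  obtain ⟨C, hC⟩ := hφ m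
  exact ⟨C, by filter_upwards [hC] with ε hCε _ _ using hCε y hy⟩

end NegligiblyBoundedOn

lemma exists_pos_forall_lt_iff_eventually {p : ℝ → Prop} :
    (∃ ε₀ : ℝ, 0 < ε₀ ∧ ∀ ε : ℝ, 0 < ε → ε < ε₀ → p ε) ↔ ∀ᶠ ε in 𝓝[>] 0, p ε := by
  simp only [(nhdsGT_basis (0 : ℝ)).eventually_iff, mem_Ioo, and_imp]

lemma isNegligible_univ_iff {u : ℝ → E → F} :
    IsNegligible univ u ↔ (∀ ε ∈ Ioc (0 : ℝ) 1, ContDiff ℝ (⊤ : ℕ∞) (u ε)) ∧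
      ∀ K : Set E, IsCompact K → ∀ n : ℕ,
        NegligiblyBoundedOn K fun ε x => ‖iteratedFDeriv ℝ n (u ε) x‖ := by
  simp only [IsNegligible, NegligiblyBoundedOn, contDiffOn_univ, iteratedFDerivWithin_univ,
    subset_univ, true_implies, exists_pos_forall_lt_iff_eventually]

lemma IsModerate.exists_bound {u : ℝ → E → F} (hu : IsModerate univ u) {K : Set E}
    (hK : IsCompact K) (n : ℕ) :
    ∃ N : ℕ, ∃ C : ℝ, ∀ᶠ ε in 𝓝[>] 0, ∀ x ∈ K, ‖iteratedFDeriv ℝ n (u ε) x‖ ≤ C / ε ^ N := by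
  obtain ⟨N, C, hC⟩ := hu.2 K hK (subset_univ K) n
  rw [exists_pos_forall_lt_iff_eventually] at hC
  refine ⟨N, C, hC.mono fun ε h x hx => ?_⟩
  simpa only [iteratedFDerivWithin_univ, zpow_neg, zpow_natCast, div_eq_mul_inv] using h x hx

lemma iteratedFDeriv_comp_smul_sub_smul {f : E → F} (hf : ContDiff ℝ (⊤ : ℕ∞) f) (c r : ℝ)
    (j : ℕ) (x : E) :
    iteratedFDeriv ℝ j (fun y => f (c • y) - r • f y) x =
      c ^ j • iteratedFDeriv ℝ j f (c • x) - r • iteratedFDeriv ℝ j f x := by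
  have hj : ContDiff ℝ j f := hf.of_le (by exact_mod_cast le_top)
  have hjc : ContDiffAt ℝ j (fun y => f (c • y)) x :=
    (hj.comp (contDiff_const_smul c)).contDiffAt
  rw [fun_iteratedFDeriv_sub_apply hjc (hj.const_smul r).contDiffAt,
    iteratedFDeriv_comp_const_smul c hj,
    iteratedFDeriv_const_smul_apply' hj.contDiffAt]

theorem norm_iteratedFDeriv_le_taylor_bound {f : E → F} (hf : ContDiff ℝ (⊤ : ℕ∞) f) {ρ M : ℝ}
    {n p : ℕ} (hM : ∀ w ∈ closedBall (0 : E) ρ, ‖iteratedFDeriv ℝ (n + p) f w‖ ≤ M) {z : E}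
    (hz : z ∈ closedBall (0 : E) ρ) : ‖iteratedFDeriv ℝ n f z‖ ≤
      ∑ i ∈ Finset.range p, ρ ^ i * ‖iteratedFDeriv ℝ (n + i) f 0‖ + ρ ^ p * M := by
  induction p generalizing n z with
  | zero => simpa using hM z hz
  | succ p ih =>
    set S := ∑ i ∈ Finset.range p, ρ ^ i * ‖iteratedFDeriv ℝ (n + 1 + i) f 0‖ + ρ ^ p * M
    have hderiv : ∀ w ∈ closedBall (0 : E) ρ, ‖fderiv ℝ (iteratedFDeriv ℝ n f) w‖ ≤ S := by
      refine fun w hw => norm_fderiv_iteratedFDeriv.trans_le (ih (fun w hw => ?_) hw)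
      rw [add_right_comm, add_assoc]
      exact hM w hw
    have hz' : ‖z‖ ≤ ρ := mem_closedBall_zero_iff.1 hz
    have hS : 0 ≤ S := (norm_nonneg (fderiv ℝ (iteratedFDeriv ℝ n f) z)).trans (hderiv z hz)
    have hmvt := (convex_closedBall (0 : E) ρ).norm_image_sub_le_of_norm_fderiv_le
      (fun w _ => hf.differentiable_iteratedFDeriv (by exact_mod_cast ENat.natCast_lt_top n) w)
      hderiv (mem_closedBall_self ((norm_nonneg z).trans hz')) hz
    rw [sub_zero] at hmvt
    have hshift : ∑ i ∈ Finset.range p, ρ ^ (i + 1) * ‖iteratedFDeriv ℝ (n + (i + 1)) f 0‖ =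
        (∑ i ∈ Finset.range p, ρ ^ i * ‖iteratedFDeriv ℝ (n + 1 + i) f 0‖) * ρ := by
      rw [Finset.sum_mul]
      refine Finset.sum_congr rfl fun i _ => ?_
      rw [pow_succ, show n + (i + 1) = n + 1 + i by omega]
      ring
    calc ‖iteratedFDeriv ℝ n f z‖
        ≤ ‖iteratedFDeriv ℝ n f 0‖ + S * ρ := by
          linarith [norm_le_insert' (iteratedFDeriv ℝ n f z) (iteratedFDeriv ℝ n f 0),
            mul_le_mul_of_nonneg_left hz' hS]
      _ = _ := by
          rw [Finset.sum_range_succ', hshift]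
          simp only [S, pow_zero, one_mul, Nat.add_zero, pow_succ]
          ring

lemma le_pow_mul_of_le_mul_comp_smul {S : Set E} {φ : E → ℝ} {c A B : ℝ} (hA : 1 ≤ A)
    (hB : 0 ≤ B) (hS : ∀ x ∈ S, c • x ∈ S) (hφ : ∀ x ∈ S, φ x ≤ A * φ (c • x) + B) (k : ℕ)
    {x : E} (hx : x ∈ S) : φ x ≤ A ^ k * (φ (c ^ k • x) + k * B) := by
  induction k generalizing x with
  | zero => simp
  | succ k ih =>
    have hcx := ih (hS x hx)
    rw [smul_smul, ← pow_succ] at hcx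
    have hB' : B ≤ A ^ k * A * B :=
      le_mul_of_one_le_left hB (by rw [← pow_succ]; exact one_le_pow₀ hA)
    calc φ x ≤ A * φ (c • x) + B := hφ x hx
      _ ≤ A * (A ^ k * (φ (c ^ (k + 1) • x) + k * B)) + B := by
          gcongr
      _ ≤ A ^ (k + 1) * (φ (c ^ (k + 1) • x) + (k + 1 : ℕ) * B) := by
          push_cast
          rw [pow_succ A k]
          linarith [hB']

lemma exists_two_pow_mem_Icc {x : ℝ} (hx : 1 ≤ x) : ∃ k : ℕ, x ≤ 2 ^ k ∧ (2 : ℝ) ^ k ≤ 2 * x := by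
  obtain ⟨n, hn, hn'⟩ := exists_nat_pow_near hx one_lt_two
  exact ⟨n + 1, hn'.le, by rw [pow_succ]; linarith⟩

theorem NegligiblyBoundedOn.of_halving {φ : ℝ → E → ℝ} {P N : ℕ} {R C : ℝ} (hR : 1 ≤ R)
    (hhalf : NegligiblyBoundedOn (closedBall 0 R)
      fun ε x => φ ε x - 2 ^ P * φ ε ((2⁻¹ : ℝ) • x))
    (hsmall : NegligiblyBoundedOn (closedBall 0 1)
      fun ε z => φ ε z - C * ‖z‖ ^ (P + 1) / ε ^ N) :
    NegligiblyBoundedOn (closedBall 0 R) φ := by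
  intro m
  obtain ⟨C₁, h₁⟩ := hhalf ((N + m) * (P + 1) + m)
  obtain ⟨C₂, h₂⟩ := hsmall ((N + m) * P + m)
  refine ⟨(2 * R) ^ P * (|C| + |C₂|) + (2 * R) ^ (P + 1) * |C₁|, ?_⟩
  filter_upwards [h₁, h₂, Ioo_mem_nhdsGT one_pos] with ε h₁ h₂ hε x hx
  obtain ⟨hε₀, hε₁⟩ := hε
  -- `δ` is the radius that `k` halvings have to reach, and `t = 2 ^ k ≈ R / δ`
  set δ := ε ^ (N + m) with hδ
  have hδ₀ : 0 < δ := by positivity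
  have hδ₁ : δ ≤ 1 := pow_le_one₀ hε₀.le hε₁.le
  obtain ⟨k, hk, hk'⟩ := exists_two_pow_mem_Icc ((one_le_div hδ₀).2 (hδ₁.trans hR))
  set t : ℝ := 2 ^ k with ht
  rw [div_le_iff₀ hδ₀] at hk
  rw [← mul_div_assoc, le_div_iff₀ hδ₀] at hk'
  have hstable : ∀ y ∈ closedBall (0 : E) R, (2⁻¹ : ℝ) • y ∈ closedBall (0 : E) R := by
    intro y hy
    rw [mem_closedBall_zero_iff] at hy ⊢
    rw [norm_smul]
    norm_num
    linarith [norm_nonneg y]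
  have hstep : ∀ y ∈ closedBall (0 : E) R,
      φ ε y ≤ 2 ^ P * φ ε ((2⁻¹ : ℝ) • y) + |C₁| * ε ^ ((N + m) * (P + 1) + m) := fun y hy => by
    linarith [h₁ y hy, mul_le_mul_of_nonneg_right (le_abs_self C₁)
      (pow_nonneg hε₀.le ((N + m) * (P + 1) + m))]
  have hiter := le_pow_mul_of_le_mul_comp_smul (one_le_pow₀ one_le_two) (by positivity)
    hstable hstep k hx
  set y := (2⁻¹ : ℝ) ^ k • x
  have hy : ‖y‖ ≤ δ := by
    rw [norm_smul, norm_pow, norm_inv, Real.norm_two, inv_pow, ← ht,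
      inv_mul_le_iff₀ (by positivity)]
    exact (mem_closedBall_zero_iff.1 hx).trans hk
  have hεNm : ε ^ (N + m) = ε ^ N * ε ^ m := pow_add ε N m
  have hsmall_y : φ ε y ≤ (|C| + |C₂|) * δ ^ P * ε ^ m := by
    have h := h₂ y (mem_closedBall_zero_iff.2 (hy.trans hδ₁))
    have hCy : C * ‖y‖ ^ (P + 1) / ε ^ N ≤ |C| * δ ^ P * ε ^ m := calc
      C * ‖y‖ ^ (P + 1) / ε ^ N ≤ |C| * δ ^ (P + 1) / ε ^ N := by
        gcongr
        exact le_abs_self C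
      _ = |C| * δ ^ P * ε ^ m := by
        rw [pow_succ, hδ, hεNm]
        field_simp
    have hC₂ : C₂ * ε ^ ((N + m) * P + m) ≤ |C₂| * δ ^ P * ε ^ m := by
      rw [pow_add, pow_mul, mul_assoc]
      exact mul_le_mul_of_nonneg_right (le_abs_self C₂) (by positivity)
    linarith
  have hkB :
      (k : ℝ) * (|C₁| * ε ^ ((N + m) * (P + 1) + m)) ≤ t * |C₁| * δ ^ (P + 1) * ε ^ m := by
    have hkt : (k : ℝ) ≤ t := by rw [ht]; exact_mod_cast (Nat.lt_two_pow_self (n := k)).le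
    rw [pow_add, pow_mul, ← hδ]
    calc (k : ℝ) * (|C₁| * (δ ^ (P + 1) * ε ^ m)) ≤ t * (|C₁| * (δ ^ (P + 1) * ε ^ m)) := by
          gcongr
      _ = _ := by ring
  calc φ ε x ≤ (2 ^ P) ^ k * (φ ε y + k * (|C₁| * ε ^ ((N + m) * (P + 1) + m))) := hiter
    _ ≤ t ^ P * ((|C| + |C₂|) * δ ^ P * ε ^ m + t * |C₁| * δ ^ (P + 1) * ε ^ m) := by
      rw [← pow_mul, mul_comm P k, pow_mul]
      gcongr
    _ = (t * δ) ^ P * (|C| + |C₂|) * ε ^ m + (t * δ) ^ (P + 1) * |C₁| * ε ^ m := by ring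
    _ ≤ (2 * R) ^ P * (|C| + |C₂|) * ε ^ m + (2 * R) ^ (P + 1) * |C₁| * ε ^ m := by gcongr
    _ = _ := by ring

def IsHomogeneous (α : ℝ) (u : ℝ → E → F) : Prop :=
  ∀ lam : ℝ, 0 < lam → IsNegligible univ fun ε x => u ε (lam • x) - lam ^ α • u ε x

section Homogeneous

variable {u : ℝ → E → F} {α : ℝ}

lemma IsHomogeneous.negligiblyBoundedOn_iteratedFDeriv_zero (hu : IsHomogeneous α u)
    (hsmooth : ∀ᶠ ε in 𝓝[>] 0, ContDiff ℝ (⊤ : ℕ∞) (u ε)) (hα : ∀ k : ℕ, α ≠ k) (j : ℕ) :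
    NegligiblyBoundedOn {0} fun ε x => ‖iteratedFDeriv ℝ j (u ε) x‖ := by
  have hδ : 0 < |(2 : ℝ) ^ j - 2 ^ α| := by
    rw [abs_pos, sub_ne_zero, ← Real.rpow_natCast, Ne, Real.rpow_right_inj two_pos (by norm_num)]
    exact (hα j).symm
  refine (((isNegligible_univ_iff.1 (hu 2 two_pos)).2 {0} isCompact_singleton j).const_mul
    (inv_nonneg.2 hδ.le)).mono subset_rfl ?_
  filter_upwards [hsmooth] with ε hε x hx
  rw [mem_singleton_iff.1 hx, iteratedFDeriv_comp_smul_sub_smul hε, smul_zero, ← sub_smul,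
    norm_smul, Real.norm_eq_abs, inv_mul_cancel_left₀ hδ.ne']

lemma IsHomogeneous.negligiblyBoundedOn_halving [ProperSpace E] (hu : IsHomogeneous α u)
    (hsmooth : ∀ᶠ ε in 𝓝[>] 0, ContDiff ℝ (⊤ : ℕ∞) (u ε)) (n : ℕ) (R : ℝ) :
    NegligiblyBoundedOn (closedBall 0 R) fun ε x => ‖iteratedFDeriv ℝ n (u ε) x‖ -
      2 ^ ⌈α⌉₊ * ‖iteratedFDeriv ℝ n (u ε) ((2⁻¹ : ℝ) • x)‖ := by
  refine (((isNegligible_univ_iff.1 (hu 2⁻¹ (by norm_num))).2 (closedBall 0 R)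
    (isCompact_closedBall 0 R) n).const_mul (c := 2 ^ α) (by positivity)).mono subset_rfl ?_
  filter_upwards [hsmooth] with ε hε x _
  rw [iteratedFDeriv_comp_smul_sub_smul hε]
  set a := iteratedFDeriv ℝ n (u ε) x
  set b := iteratedFDeriv ℝ n (u ε) ((2⁻¹ : ℝ) • x)
  have h2α : (2 : ℝ) ^ α * (2⁻¹ : ℝ) ^ α = 1 := by
    rw [Real.inv_rpow zero_le_two, mul_inv_cancel₀ (by positivity)]
  have hαP : (2 : ℝ) ^ α ≤ 2 ^ ⌈α⌉₊ := by
    rw [← Real.rpow_natCast]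
    exact Real.rpow_le_rpow_of_exponent_le one_le_two (Nat.le_ceil α)
  have hb : ‖(2⁻¹ : ℝ) ^ n • b‖ ≤ ‖b‖ := by
    rw [norm_smul]
    exact mul_le_of_le_one_left (norm_nonneg b) (by norm_num [pow_le_one₀])
  have ha : ‖(2⁻¹ : ℝ) ^ α • a‖ = (2⁻¹ : ℝ) ^ α * ‖a‖ := by
    rw [norm_smul, Real.norm_of_nonneg (by positivity)]
  calc ‖a‖ - 2 ^ ⌈α⌉₊ * ‖b‖ ≤ 2 ^ α * ((2⁻¹ : ℝ) ^ α * ‖a‖ - ‖b‖) := by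
        rw [mul_sub, ← mul_assoc, h2α, one_mul]
        gcongr
    _ ≤ 2 ^ α * ‖(2⁻¹ : ℝ) ^ n • b - (2⁻¹ : ℝ) ^ α • a‖ := by
        gcongr
        linarith [norm_sub_norm_le ((2⁻¹ : ℝ) ^ α • a) ((2⁻¹ : ℝ) ^ n • b),
          norm_sub_rev ((2⁻¹ : ℝ) ^ n • b) ((2⁻¹ : ℝ) ^ α • a)]

lemma IsModerate.negligiblyBoundedOn_taylor [ProperSpace E] (hmod : IsModerate univ u)
    (hsmooth : ∀ᶠ ε in 𝓝[>] 0, ContDiff ℝ (⊤ : ℕ∞) (u ε))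
    (h0 : ∀ j, NegligiblyBoundedOn {0} fun ε x => ‖iteratedFDeriv ℝ j (u ε) x‖) (n p : ℕ) :
    ∃ N : ℕ, ∃ C : ℝ, NegligiblyBoundedOn (closedBall 0 1)
      fun ε z => ‖iteratedFDeriv ℝ n (u ε) z‖ - C * ‖z‖ ^ p / ε ^ N := by
  obtain ⟨N, C, hC⟩ := hmod.exists_bound (isCompact_closedBall (0 : E) 1) (n + p)
  refine ⟨N, C, (NegligiblyBoundedOn.sum (Finset.range p) fun i _ =>
    (h0 (n + i)).eval_of_mem (mem_singleton 0)).mono subset_rfl ?_⟩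
  filter_upwards [hC, hsmooth] with ε hCε hε z hz
  have hzz : z ∈ closedBall (0 : E) ‖z‖ := mem_closedBall_zero_iff.2 le_rfl
  have htaylor := norm_iteratedFDeriv_le_taylor_bound hε
    (fun w hw => hCε w (closedBall_subset_closedBall (mem_closedBall_zero_iff.1 hz) hw)) hzz
  have hsum : ∑ i ∈ Finset.range p, ‖z‖ ^ i * ‖iteratedFDeriv ℝ (n + i) (u ε) 0‖ ≤
      ∑ i ∈ Finset.range p, ‖iteratedFDeriv ℝ (n + i) (u ε) 0‖ :=
    Finset.sum_le_sum fun i _ => mul_le_of_le_one_left (norm_nonneg _)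
      (pow_le_one₀ (norm_nonneg z) (mem_closedBall_zero_iff.1 hz))
  rw [Finset.sum_apply, Finset.sum_apply]
  rw [mul_div_assoc', mul_comm] at htaylor
  linarith

end Homogeneous

/-- if a nonzero generalized function on ℝ^d is homogeneous of degree `α`,
then `α` is a non-negative integer. -/
theorem statement_9
    (d : ℕ) (α : ℝ) (u : ℝ → EuclideanSpace ℝ (Fin d) → ℂ)
    (hu : IsModerate (Set.univ : Set (EuclideanSpace ℝ (Fin d))) u)
    (hne : ¬ IsNegligible (Set.univ : Set (EuclideanSpace ℝ (Fin d))) u)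
    (hhom : ∀ lam : ℝ, 0 < lam →
      IsNegligible (Set.univ : Set (EuclideanSpace ℝ (Fin d)))
        (fun ε x => u ε (lam • x) - ((lam ^ α : ℝ) : ℂ) * u ε x)) :
    ∃ k : ℕ, α = (k : ℝ) := by
  by_contra! hα
  have hhom' : IsHomogeneous α u := by simpa only [IsHomogeneous, Complex.real_smul] using hhom
  have hsmooth : ∀ ε ∈ Ioc (0 : ℝ) 1, ContDiff ℝ (⊤ : ℕ∞) (u ε) :=
    fun ε hε => contDiffOn_univ.1 (hu.1 ε hε)
  have hsmooth_ev := eventually_of_mem (Ioc_mem_nhdsGT one_pos) hsmooth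
  refine hne (isNegligible_univ_iff.2 ⟨hsmooth, fun K hK n => ?_⟩)
  obtain ⟨r, hr⟩ := hK.isBounded.subset_closedBall 0
  obtain ⟨N, C, hsmall⟩ := hu.negligiblyBoundedOn_taylor hsmooth_ev
    (hhom'.negligiblyBoundedOn_iteratedFDeriv_zero hsmooth_ev hα) n (⌈α⌉₊ + 1)
  exact (NegligiblyBoundedOn.of_halving (le_max_right r 1)
    (hhom'.negligiblyBoundedOn_halving hsmooth_ev n _) hsmall).mono
    (hr.trans (closedBall_subset_closedBall (le_max_left r 1))) (.of_forall fun _ _ _ => le_rfl)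
end
end

section
/- Let u ∈ G(ℝ^d∖{0}), u ≠ 0, be homogeneous of degree α ∈ ℝ. If û ∈ G(ℝ^d) is homogeneous of degree β ∈ ℝ and its restriction satisfies û|_{ℝ^d∖{0}} = u in G(ℝ^d∖{0}), then α = β. -/
open Set Filter Topology MeasureTheory

noncomputable section

variable {E F : Type*} [NormedAddCommGroup E] [NormedSpace ℝ E]
  [NormedAddCommGroup F] [NormedSpace ℝ F]

/-! With `λ = 2`, on `ℝ^d∖{0}` one has
`(2^β - 2^α) u(x) = (u(2x) - 2^α u(x)) - (û(2x) - 2^β û(x)) + (û(2x) - u(2x)) - 2^β (û(x) - u(x))`,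
and each bracket is negligible, the third one because dilations preserve `ℝ^d∖{0}`. So if
`α ≠ β`, dividing by `2^β - 2^α ≠ 0` makes `u` negligible. -/

variable {G : Type*} [NormedAddCommGroup G] [NormedSpace ℝ G]

namespace IsNegligible

variable {Ω : Set E} {u v : ℝ → E → F}

theorem contDiffWithinAt (hu : IsNegligible Ω u) {ε : ℝ} (hε : ε ∈ Ioc (0 : ℝ) 1) {x : E}
    (hx : x ∈ Ω) (n : ℕ) : ContDiffWithinAt ℝ n (u ε) Ω x :=
  (hu.1 ε hε).of_le (by exact_mod_cast le_top) x hx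

theorem of_forall_Ioc (hsmooth : ∀ ε ∈ Ioc (0 : ℝ) 1, ContDiffOn ℝ (⊤ : ℕ∞) (u ε) Ω)
    (hbound : ∀ K : Set E, IsCompact K → K ⊆ Ω → ∀ n m : ℕ, ∃ C ε₀ : ℝ, 0 < ε₀ ∧
      ∀ ε ∈ Ioc (0 : ℝ) 1, ε < ε₀ → ∀ x ∈ K,
        ‖iteratedFDerivWithin ℝ n (u ε) Ω x‖ ≤ C * ε ^ m) :
    IsNegligible Ω u := by
  refine ⟨hsmooth, fun K hK hKΩ n m => ?_⟩
  obtain ⟨C, ε₀, hε₀, hC⟩ := hbound K hK hKΩ n m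
  exact ⟨C, min ε₀ 1, lt_min hε₀ one_pos, fun ε hε hεlt =>
    hC ε ⟨hε, (hεlt.trans_le (min_le_right _ _)).le⟩ (hεlt.trans_le (min_le_left _ _))⟩

theorem add (hΩ : UniqueDiffOn ℝ Ω) (hu : IsNegligible Ω u) (hv : IsNegligible Ω v) :
    IsNegligible Ω fun ε x => u ε x + v ε x := by
  refine of_forall_Ioc (fun ε hε => (hu.1 ε hε).add (hv.1 ε hε)) fun K hK hKΩ n m => ?_
  obtain ⟨C₁, ε₁, hε₁, h₁⟩ := hu.2 K hK hKΩ n m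
  obtain ⟨C₂, ε₂, hε₂, h₂⟩ := hv.2 K hK hKΩ n m
  refine ⟨C₁ + C₂, min ε₁ ε₂, lt_min hε₁ hε₂, fun ε hε hεlt x hx => ?_⟩
  rw [fun_iteratedFDerivWithin_add_apply (hu.contDiffWithinAt hε (hKΩ hx) n)
    (hv.contDiffWithinAt hε (hKΩ hx) n) hΩ (hKΩ hx)]
  calc _ ≤ C₁ * ε ^ m + C₂ * ε ^ m := (norm_add_le _ _).trans (add_le_add
        (h₁ ε hε.1 (hεlt.trans_le (min_le_left _ _)) x hx)
        (h₂ ε hε.1 (hεlt.trans_le (min_le_right _ _)) x hx))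
    _ = (C₁ + C₂) * ε ^ m := by ring

theorem const_smul {𝕜 : Type*} [NormedField 𝕜] [NormedSpace 𝕜 F] [SMulCommClass ℝ 𝕜 F]
    (hΩ : UniqueDiffOn ℝ Ω) (hu : IsNegligible Ω u) (c : 𝕜) :
    IsNegligible Ω fun ε x => c • u ε x := by
  refine of_forall_Ioc (fun ε hε => (hu.1 ε hε).const_smul c) fun K hK hKΩ n m => ?_
  obtain ⟨C, ε₀, hε₀, hC⟩ := hu.2 K hK hKΩ n m
  refine ⟨‖c‖ * C, ε₀, hε₀, fun ε hε hεlt x hx => ?_⟩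
  change ‖iteratedFDerivWithin ℝ n (c • u ε) Ω x‖ ≤ _
  rw [iteratedFDerivWithin_const_smul_apply (hu.contDiffWithinAt hε (hKΩ hx) n) hΩ (hKΩ hx),
    norm_smul, mul_assoc]
  exact mul_le_mul_of_nonneg_left (hC ε hε.1 hεlt x hx) (norm_nonneg c)

theorem sub (hΩ : UniqueDiffOn ℝ Ω) (hu : IsNegligible Ω u) (hv : IsNegligible Ω v) :
    IsNegligible Ω fun ε x => u ε x - v ε x := by
  simpa only [neg_one_smul, ← sub_eq_add_neg] using hu.add hΩ (hv.const_smul hΩ (-1 : ℝ))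

theorem of_const_smul {𝕜 : Type*} [NormedField 𝕜] [NormedSpace 𝕜 F] [SMulCommClass ℝ 𝕜 F]
    (hΩ : UniqueDiffOn ℝ Ω) {c : 𝕜} (hc : c ≠ 0) (h : IsNegligible Ω fun ε x => c • u ε x) :
    IsNegligible Ω u := by
  simpa only [inv_smul_smul₀ hc] using h.const_smul hΩ c⁻¹

theorem mono {Ω' : Set E} (hΩ' : IsOpen Ω') (hΩ'Ω : Ω' ⊆ Ω) (hu : IsNegligible Ω u) :
    IsNegligible Ω' u := by
  refine ⟨fun ε hε => (hu.1 ε hε).mono hΩ'Ω, fun K hK hKΩ' n m => ?_⟩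
  obtain ⟨C, ε₀, hε₀, hC⟩ := hu.2 K hK (hKΩ'.trans hΩ'Ω) n m
  refine ⟨C, ε₀, hε₀, fun ε hε hεlt x hx => ?_⟩
  have hΩ'_nhds : Ω' ∈ 𝓝 x := hΩ'.mem_nhds (hKΩ' hx)
  rw [iteratedFDerivWithin_congr_set ((eventuallyEq_univ.2 hΩ'_nhds).trans
    (eventuallyEq_univ.2 (mem_of_superset hΩ'_nhds hΩ'Ω)).symm)]
  exact hC ε hε hεlt x hx

theorem comp_continuousLinearMap (L : G →L[ℝ] E) (hΩ : UniqueDiffOn ℝ Ω)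
    (hLΩ : UniqueDiffOn ℝ (L ⁻¹' Ω)) (hu : IsNegligible Ω u) :
    IsNegligible (L ⁻¹' Ω) fun ε x => u ε (L x) := by
  refine of_forall_Ioc (fun ε hε => (hu.1 ε hε).comp_continuousLinearMap L)
    fun K hK hKΩ n m => ?_
  obtain ⟨C, ε₀, hε₀, hC⟩ := hu.2 (L '' K) (hK.image L.continuous) (image_subset_iff.2 hKΩ) n m
  refine ⟨C * ‖L‖ ^ n, ε₀, hε₀, fun ε hε hεlt x hx => ?_⟩
  have hcomp := L.iteratedFDerivWithin_comp_right (hu.1 ε hε) hΩ hLΩ (hKΩ hx)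
    (i := n) (by exact_mod_cast le_top)
  calc ‖iteratedFDerivWithin ℝ n (fun x => u ε (L x)) (L ⁻¹' Ω) x‖
      ≤ ‖iteratedFDerivWithin ℝ n (u ε) Ω (L x)‖ * ∏ _i : Fin n, ‖L‖ :=
        hcomp ▸ ContinuousMultilinearMap.norm_compContinuousLinearMap_le _ _
    _ ≤ C * ε ^ m * ‖L‖ ^ n := by
        rw [Finset.prod_const, Finset.card_univ, Fintype.card_fin]
        gcongr
        exact hC ε hε.1 hεlt (L x) (mem_image_of_mem L hx)
    _ = C * ‖L‖ ^ n * ε ^ m := by ring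

theorem comp_smul {a : ℝ} (ha : a ≠ 0) (hu : IsNegligible ({0}ᶜ : Set E) u) :
    IsNegligible ({0}ᶜ : Set E) fun ε x => u ε (a • x) := by
  have hpre : (a • ContinuousLinearMap.id ℝ E) ⁻¹' {0}ᶜ = {0}ᶜ := by
    ext x
    simp [ha]
  have hΩ : UniqueDiffOn ℝ ({0}ᶜ : Set E) := isOpen_compl_singleton.uniqueDiffOn
  have h := hu.comp_continuousLinearMap (a • ContinuousLinearMap.id ℝ E) hΩ (by rwa [hpre])
  rw [hpre] at h
  exact h

end IsNegligible

theorem statement_14_general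
    (d : ℕ) (α β : ℝ)
    (u : ℝ → EuclideanSpace ℝ (Fin d) → ℂ)
    (hne : ¬ IsNegligible ({0}ᶜ : Set (EuclideanSpace ℝ (Fin d))) u)
    (hhom : ∀ lam : ℝ, 0 < lam →
      IsNegligible ({0}ᶜ : Set (EuclideanSpace ℝ (Fin d)))
        (fun ε x => u ε (lam • x) - ((lam ^ α : ℝ) : ℂ) * u ε x))
    (uh : ℝ → EuclideanSpace ℝ (Fin d) → ℂ)
    (huhhom : ∀ lam : ℝ, 0 < lam →
      IsNegligible (Set.univ : Set (EuclideanSpace ℝ (Fin d)))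
        (fun ε x => uh ε (lam • x) - ((lam ^ β : ℝ) : ℂ) * uh ε x))
    (hrestr : IsNegligible ({0}ᶜ : Set (EuclideanSpace ℝ (Fin d)))
        (fun ε x => uh ε x - u ε x)) :
    α = β := by
  set Ω : Set (EuclideanSpace ℝ (Fin d)) := {0}ᶜ
  have hΩ : IsOpen Ω := isOpen_compl_singleton
  have hΩ' : UniqueDiffOn ℝ Ω := hΩ.uniqueDiffOn
  by_contra hαβ
  have hc : (((2 : ℝ) ^ β : ℝ) : ℂ) - ((2 : ℝ) ^ α : ℝ) ≠ 0 := by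
    rw [sub_ne_zero, Ne, Complex.ofReal_inj, Real.rpow_right_inj two_pos (by norm_num)]
    exact Ne.symm hαβ
  apply hne
  have hA := hhom 2 two_pos
  have hB := (huhhom 2 two_pos).mono hΩ (subset_univ Ω)
  have hR₂ := hrestr.comp_smul two_ne_zero
  have key : IsNegligible Ω fun ε x => ((((2 : ℝ) ^ β : ℝ) : ℂ) - ((2 : ℝ) ^ α : ℝ)) • u ε x := by
    convert (hA.sub hΩ' hB).add hΩ' (hR₂.sub hΩ' (hrestr.const_smul hΩ' (((2 : ℝ) ^ β : ℝ) : ℂ)))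
      using 3 with ε x
    simp only [smul_eq_mul]
    ring
  exact key.of_const_smul hΩ' hc

/-- if a nonzero `u ∈ G(ℝ^d∖{0})` homogeneous of degree `α` is the
restriction of some `û ∈ G(ℝ^d)` homogeneous of degree `β`, then `α = β`. -/
theorem statement_14
    (d : ℕ) (α β : ℝ)
    (u : ℝ → EuclideanSpace ℝ (Fin d) → ℂ)
    (hu : IsModerate ({0}ᶜ : Set (EuclideanSpace ℝ (Fin d))) u)
    (hne : ¬ IsNegligible ({0}ᶜ : Set (EuclideanSpace ℝ (Fin d))) u)
    (hhom : ∀ lam : ℝ, 0 < lam →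
      IsNegligible ({0}ᶜ : Set (EuclideanSpace ℝ (Fin d)))
        (fun ε x => u ε (lam • x) - ((lam ^ α : ℝ) : ℂ) * u ε x))
    (uh : ℝ → EuclideanSpace ℝ (Fin d) → ℂ)
    (huh : IsModerate (Set.univ : Set (EuclideanSpace ℝ (Fin d))) uh)
    (huhhom : ∀ lam : ℝ, 0 < lam →
      IsNegligible (Set.univ : Set (EuclideanSpace ℝ (Fin d)))
        (fun ε x => uh ε (lam • x) - ((lam ^ β : ℝ) : ℂ) * uh ε x))
    (hrestr : IsNegligible ({0}ᶜ : Set (EuclideanSpace ℝ (Fin d)))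
        (fun ε x => uh ε x - u ε x)) :
    α = β :=
  statement_14_general d α β u hne hhom uh huhhom hrestr
end
end
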